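/- arXiv:2605.24485 — 2 statements merged into one kernel-verified Lean document; each statement's English description precedes it below -/
import Mathlib

section
/- Under Assumption (A), fix 0 ≤ t < T and x₁, x₂ ∈ ℝ^d and set x(θ) = x₁ + θ(x₂ − x₁). Then ⟨a_λ(t,x₂) − a_λ(t,x₁), x₂ − x₁⟩ = ∫₀¹ (x₂−x₁)ᵀ (I_d − (T−t) D_x² Φ_λ(t,x(θ))) (x₂−x₁) dθ = (1/(2β(T−t))) ∫₀¹ Var_{η_{λ,t,x(θ)}}((x₂−x₁)·Y) dθ, where Var_{η}(ξ·Y) = ∫ (ξ·(y − a))² η(y) dy with a the barycenter of η. Consequently 0 ≤ ⟨a_λ(t,x₂) − a_λ(t,x₁), x₂ − x₁⟩ ≤ ‖x₂ − x₁‖² ∫₀¹ (d − (T−t) Δ_x Φ_λ(t,x(θ))) dθ. -/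
open MeasureTheory Real Filter Topology
open scoped RealInnerProductSpace

noncomputable section

/-- The heat kernel with diffusivity `β`: `G_r(z) = (4πβr)^(−d/2) exp(−‖z‖²/(4βr))`. -/
def heatK {d : ℕ} (β r : ℝ) (z : EuclideanSpace ℝ (Fin d)) : ℝ :=
  (4 * π * β * r) ^ (-(d : ℝ) / 2) * Real.exp (-‖z‖ ^ 2 / (4 * β * r))

/-- The Laplacian of a scalar function on `ℝ^d`. -/
def lap {d : ℕ} (g : EuclideanSpace ℝ (Fin d) → ℝ) (x : EuclideanSpace ℝ (Fin d)) : ℝ :=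
  ∑ i : Fin d,
    fderiv ℝ (fun z => fderiv ℝ g z (EuclideanSpace.single i 1)) x (EuclideanSpace.single i 1)

/-- The normalized Gibbs density `π_λ(y) = e^{−α_λ f(y)} / M_λ`, with `α_λ = T/(2λβ)`. -/
def gibbsDen {d : ℕ} (T β lam : ℝ) (f : EuclideanSpace ℝ (Fin d) → ℝ)
    (y : EuclideanSpace ℝ (Fin d)) : ℝ :=
  Real.exp (-(T / (2 * lam * β)) * f y) / ∫ z, Real.exp (-(T / (2 * lam * β)) * f z)

/-- `h_λ(t,x) = ∫ G_{T−t}(x−y) π_λ(y) dy`. -/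
def hHC {d : ℕ} (T β lam : ℝ) (f : EuclideanSpace ℝ (Fin d) → ℝ) (t : ℝ)
    (x : EuclideanSpace ℝ (Fin d)) : ℝ :=
  ∫ y, heatK β (T - t) (x - y) * gibbsDen T β lam f y

/-- The conditional terminal density `η_{λ,t,x}(y) = G_{T−t}(x−y) π_λ(y) / h_λ(t,x)`. -/
def etaHC {d : ℕ} (T β lam : ℝ) (f : EuclideanSpace ℝ (Fin d) → ℝ) (t : ℝ)
    (x y : EuclideanSpace ℝ (Fin d)) : ℝ :=
  heatK β (T - t) (x - y) * gibbsDen T β lam f y / hHC T β lam f t x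

/-- The barycenter `a_λ(t,x) = ∫ y η_{λ,t,x}(y) dy`. -/
def aHC {d : ℕ} (T β lam : ℝ) (f : EuclideanSpace ℝ (Fin d) → ℝ) (t : ℝ)
    (x : EuclideanSpace ℝ (Fin d)) : EuclideanSpace ℝ (Fin d) :=
  ∫ y, etaHC T β lam f t x y • y

/-- The optimal drift `u*_λ(t,x) = 2β ∇_x log h_λ(t,x)`. -/
def uHC {d : ℕ} (T β lam : ℝ) (f : EuclideanSpace ℝ (Fin d) → ℝ) (t : ℝ)
    (x : EuclideanSpace ℝ (Fin d)) : EuclideanSpace ℝ (Fin d) :=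
  (2 * β) • gradient (fun z => Real.log (hHC T β lam f t z)) x

/-- The potential `Φ_λ(t,x) = −2β log h_λ(t,x)`. -/
def PhiHC {d : ℕ} (T β lam : ℝ) (f : EuclideanSpace ℝ (Fin d) → ℝ) (t : ℝ)
    (x : EuclideanSpace ℝ (Fin d)) : ℝ :=
  -(2 * β) * Real.log (hHC T β lam f t x)

/-- The value function `V_λ(t,x) = −(2λβ/T) log h_λ(t,x) − (2λβ/T) log M_λ`. -/
def VHC {d : ℕ} (T β lam : ℝ) (f : EuclideanSpace ℝ (Fin d) → ℝ) (t : ℝ)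
    (x : EuclideanSpace ℝ (Fin d)) : ℝ :=
  -(2 * lam * β / T) * Real.log (hHC T β lam f t x)
    - (2 * lam * β / T) * Real.log (∫ z, Real.exp (-(T / (2 * lam * β)) * f z))


lemma pow_le_exp_aux (k : ℕ) {x : ℝ} (hx : 0 ≤ x) : x ^ k ≤ k.factorial * Real.exp x := by
  have h := Real.sum_le_exp_of_nonneg hx (k + 1)
  have h1 : x ^ k / k.factorial ≤ Real.exp x := by
    refine le_trans ?_ h
    exact Finset.single_le_sum (f := fun i => x ^ i / i.factorial)
      (fun i _ => by positivity) (Finset.self_mem_range_succ k)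
  have hk : (0:ℝ) < k.factorial := by positivity
  rw [div_le_iff₀ hk] at h1
  linarith [h1]

lemma gauss_moment {c : ℝ} (hc : 0 < c) (k : ℕ) {s : ℝ} (hs : 0 ≤ s) :
    s ^ k * Real.exp (-s ^ 2 / c) ≤ 1 + c ^ k * k.factorial := by
  have hexp : Real.exp (-s ^ 2 / c) ≤ 1 := by
    rw [Real.exp_le_one_iff]
    have : 0 ≤ s ^ 2 / c := by positivity
    rw [neg_div]; linarith
  have key : s ^ (2 * k) * Real.exp (-s ^ 2 / c) ≤ c ^ k * k.factorial := by
    have h1 : (s ^ 2 / c) ^ k ≤ k.factorial * Real.exp (s ^ 2 / c) :=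
      pow_le_exp_aux k (by positivity)
    have h2 : s ^ (2 * k) ≤ c ^ k * (k.factorial * Real.exp (s ^ 2 / c)) := by
      have := mul_le_mul_of_nonneg_left h1 (le_of_lt (pow_pos hc k))
      calc s ^ (2 * k) = (s ^ 2) ^ k := by rw [pow_mul]
        _ = c ^ k * (s ^ 2 / c) ^ k := by
            rw [← mul_pow]; congr 1; field_simp
        _ ≤ c ^ k * (k.factorial * Real.exp (s ^ 2 / c)) := this
    have h3 := mul_le_mul_of_nonneg_right h2 (le_of_lt (Real.exp_pos (-s ^ 2 / c)))
    calc s ^ (2 * k) * Real.exp (-s ^ 2 / c)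
        ≤ c ^ k * (k.factorial * Real.exp (s ^ 2 / c)) * Real.exp (-s ^ 2 / c) := h3
      _ = c ^ k * k.factorial * (Real.exp (s ^ 2 / c) * Real.exp (-s ^ 2 / c)) := by ring
      _ = c ^ k * k.factorial := by
          rw [← Real.exp_add]; simp [neg_div]
  rcases le_total s 1 with h | h
  · have : s ^ k ≤ 1 := pow_le_one₀ hs h
    have := mul_le_mul_of_nonneg_right this (le_of_lt (Real.exp_pos (-s ^ 2 / c)))
    have hnn : (0:ℝ) ≤ c ^ k * k.factorial := by positivity
    nlinarith
  · have : s ^ k ≤ s ^ (2 * k) := pow_le_pow_right₀ h (by omega)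
    have := mul_le_mul_of_nonneg_right this (le_of_lt (Real.exp_pos (-s ^ 2 / c)))
    linarith

lemma heatK_pos {d : ℕ} {β r : ℝ} (hβ : 0 < β) (hr : 0 < r) (z : EuclideanSpace ℝ (Fin d)) :
    0 < heatK β r z := by
  unfold heatK
  have h4 : (0:ℝ) < 4 * π * β * r := by positivity
  positivity

/-- The moment constant for the heat kernel -/
def heatC (d : ℕ) (β r : ℝ) (k : ℕ) : ℝ :=
  (4 * π * β * r) ^ (-(d : ℝ) / 2) * (1 + (4 * β * r) ^ k * k.factorial)

lemma heatC_pos {d : ℕ} {β r : ℝ} (hβ : 0 < β) (hr : 0 < r) (k : ℕ) : 0 < heatC d β r k := by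
  unfold heatC
  have h4 : (0:ℝ) < 4 * π * β * r := by positivity
  have : (0:ℝ) < (4 * β * r) ^ k * k.factorial := by positivity
  positivity

lemma heatK_moment {d : ℕ} {β r : ℝ} (hβ : 0 < β) (hr : 0 < r) (k : ℕ)
    (z : EuclideanSpace ℝ (Fin d)) :
    ‖z‖ ^ k * heatK β r z ≤ heatC d β r k := by
  unfold heatK heatC
  have h4 : (0:ℝ) < 4 * β * r := by positivity
  have h5 : (0:ℝ) < (4 * π * β * r) ^ (-(d : ℝ) / 2) := by
    have : (0:ℝ) < 4 * π * β * r := by positivity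
    positivity
  have := gauss_moment h4 k (norm_nonneg z)
  calc ‖z‖ ^ k * ((4 * π * β * r) ^ (-(d : ℝ) / 2) * Real.exp (-‖z‖ ^ 2 / (4 * β * r)))
      = (4 * π * β * r) ^ (-(d : ℝ) / 2) * (‖z‖ ^ k * Real.exp (-‖z‖ ^ 2 / (4 * β * r))) := by ring
    _ ≤ (4 * π * β * r) ^ (-(d : ℝ) / 2) * (1 + (4 * β * r) ^ k * k.factorial) := by
        exact mul_le_mul_of_nonneg_left this (le_of_lt h5)

lemma heatK_le {d : ℕ} {β r : ℝ} (hβ : 0 < β) (hr : 0 < r) (z : EuclideanSpace ℝ (Fin d)) :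
    heatK β r z ≤ heatC d β r 0 := by
  have := heatK_moment (d := d) hβ hr 0 z
  simpa using this

lemma heatK_cont {d : ℕ} (β r : ℝ) : Continuous fun z : EuclideanSpace ℝ (Fin d) => heatK β r z := by
  unfold heatK
  fun_prop

lemma hasFDerivAt_heatK {d : ℕ} {β r : ℝ} (hβ : 0 < β) (hr : 0 < r)
    (y x : EuclideanSpace ℝ (Fin d)) :
    HasFDerivAt (fun x => heatK β r (x - y))
      (((2 * β * r)⁻¹ * heatK β r (x - y)) • innerSL ℝ (y - x)) x := by
  have h4 : (4 * β * r) ≠ 0 := by positivity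
  have h1 : HasFDerivAt (fun x : EuclideanSpace ℝ (Fin d) => x - y)
      (ContinuousLinearMap.id ℝ _) x := (hasFDerivAt_id x).sub_const y
  have h2 : HasFDerivAt (fun x : EuclideanSpace ℝ (Fin d) => ‖x - y‖ ^ 2)
      (2 • (innerSL ℝ (x - y)).comp (ContinuousLinearMap.id ℝ _)) x := h1.norm_sq
  have h3 := (h2.const_mul (-(4 * β * r)⁻¹)).exp.const_mul ((4 * π * β * r) ^ (-(d : ℝ) / 2))
  have heq : (fun x : EuclideanSpace ℝ (Fin d) => heatK β r (x - y)) =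
      fun x => (4 * π * β * r) ^ (-(d : ℝ) / 2) *
        Real.exp (-(4 * β * r)⁻¹ * ‖x - y‖ ^ 2) := by
    funext z
    unfold heatK
    congr 1
    congr 1
    field_simp
  rw [heq]
  refine h3.congr_fderiv ?_
  ext ξ
  simp only [ContinuousLinearMap.smul_apply, ContinuousLinearMap.coe_comp', Function.comp_apply,
    ContinuousLinearMap.coe_id', id_eq, innerSL_apply_apply, smul_eq_mul, heatK]
  have hinner : ⟪y - x, ξ⟫ = -⟪x - y, ξ⟫ := by
    rw [← neg_sub]; exact inner_neg_left _ _
  rw [hinner]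
  have h6 : -‖x - y‖ ^ 2 / (4 * β * r) = -(4 * β * r)⁻¹ * ‖x - y‖ ^ 2 := by field_simp
  rw [h6]
  have hβr : (2 * β * r) ≠ 0 := by positivity
  field_simp
  ring
section Abstract

variable {d : ℕ}

/-- kernel times density -/
def KA (β r : ℝ) (p : EuclideanSpace ℝ (Fin d) → ℝ) (x y : EuclideanSpace ℝ (Fin d)) : ℝ :=
  heatK β r (x - y) * p y

def hA (β r : ℝ) (p : EuclideanSpace ℝ (Fin d) → ℝ) (x : EuclideanSpace ℝ (Fin d)) : ℝ :=
  ∫ y, KA β r p x y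

def wA (β r : ℝ) (p : EuclideanSpace ℝ (Fin d) → ℝ) (x : EuclideanSpace ℝ (Fin d)) :
    EuclideanSpace ℝ (Fin d) :=
  ∫ y, KA β r p x y • (y - x)

def QA (β r : ℝ) (p : EuclideanSpace ℝ (Fin d) → ℝ) (ξ x : EuclideanSpace ℝ (Fin d)) : ℝ :=
  ∫ y, KA β r p x y * ⟪ξ, y - x⟫ ^ 2

variable {β r : ℝ} {p : EuclideanSpace ℝ (Fin d) → ℝ}

lemma KA_pos (hβ : 0 < β) (hr : 0 < r) (hpp : ∀ y, 0 < p y) (x y : EuclideanSpace ℝ (Fin d)) :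
    0 < KA β r p x y := mul_pos (heatK_pos hβ hr _) (hpp y)

lemma inner_sq_le (ξ v : EuclideanSpace ℝ (Fin d)) : ⟪ξ, v⟫ ^ 2 ≤ ‖ξ‖ ^ 2 * ‖v‖ ^ 2 := by
  have h := real_inner_mul_inner_self_le ξ v
  rw [real_inner_self_eq_norm_sq, real_inner_self_eq_norm_sq] at h
  rw [pow_two]; exact h

lemma KA_cont_x (hpc : Continuous p) (y : EuclideanSpace ℝ (Fin d)) :
    Continuous fun x => KA β r p x y := by
  unfold KA
  exact ((heatK_cont β r).comp (continuous_id.sub continuous_const)).mul continuous_const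

lemma KA_cont_y (hpc : Continuous p) (x : EuclideanSpace ℝ (Fin d)) :
    Continuous fun y => KA β r p x y := by
  unfold KA
  exact ((heatK_cont β r).comp (continuous_const.sub continuous_id)).mul hpc

lemma KA_bound (hβ : 0 < β) (hr : 0 < r) (hpp : ∀ y, 0 < p y) (k : ℕ)
    (x y : EuclideanSpace ℝ (Fin d)) :
    ‖y - x‖ ^ k * KA β r p x y ≤ heatC d β r k * p y := by
  unfold KA
  have h := heatK_moment (d := d) hβ hr k (x - y)
  rw [norm_sub_rev]
  calc ‖x - y‖ ^ k * (heatK β r (x - y) * p y) = (‖x - y‖ ^ k * heatK β r (x - y)) * p y := by ring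
    _ ≤ heatC d β r k * p y := mul_le_mul_of_nonneg_right h (le_of_lt (hpp y))

lemma int_KA (hβ : 0 < β) (hr : 0 < r) (hpc : Continuous p) (hpp : ∀ y, 0 < p y)
    (hpi : Integrable p) (x : EuclideanSpace ℝ (Fin d)) :
    Integrable fun y => KA β r p x y := by
  refine (hpi.const_mul (heatC d β r 0)).mono' ((KA_cont_y hpc x).aestronglyMeasurable) ?_
  filter_upwards with y
  rw [Real.norm_of_nonneg (le_of_lt (KA_pos hβ hr hpp x y))]
  have := KA_bound hβ hr hpp 0 x y
  simpa using this

lemma int_KA_smul (hβ : 0 < β) (hr : 0 < r) (hpc : Continuous p) (hpp : ∀ y, 0 < p y)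
    (hpi : Integrable p) (x : EuclideanSpace ℝ (Fin d)) :
    Integrable fun y => KA β r p x y • (y - x) := by
  refine (hpi.const_mul (heatC d β r 1)).mono'
    (((KA_cont_y hpc x).smul (continuous_id.sub continuous_const)).aestronglyMeasurable) ?_
  filter_upwards with y
  rw [norm_smul, Real.norm_of_nonneg (le_of_lt (KA_pos hβ hr hpp x y))]
  have := KA_bound hβ hr hpp 1 x y
  calc KA β r p x y * ‖y - x‖ = ‖y - x‖ ^ 1 * KA β r p x y := by ring
    _ ≤ heatC d β r 1 * p y := this

lemma int_KA_inner1 (hβ : 0 < β) (hr : 0 < r) (hpc : Continuous p) (hpp : ∀ y, 0 < p y)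
    (hpi : Integrable p) (x ξ : EuclideanSpace ℝ (Fin d)) :
    Integrable fun y => KA β r p x y * ⟪ξ, y - x⟫ := by
  refine (hpi.const_mul (‖ξ‖ * heatC d β r 1)).mono'
    ((KA_cont_y hpc x).mul ((continuous_const.inner
      (continuous_id.sub continuous_const)))).aestronglyMeasurable ?_
  filter_upwards with y
  rw [Real.norm_eq_abs, abs_mul, abs_of_nonneg (le_of_lt (KA_pos hβ hr hpp x y))]
  have h1 : |⟪ξ, y - x⟫| ≤ ‖ξ‖ * ‖y - x‖ := abs_real_inner_le_norm ξ (y - x)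
  have h2 := KA_bound hβ hr hpp 1 x y
  have hK := le_of_lt (KA_pos hβ hr hpp x y)
  calc KA β r p x y * |⟪ξ, y - x⟫| ≤ KA β r p x y * (‖ξ‖ * ‖y - x‖) := by
        exact mul_le_mul_of_nonneg_left h1 hK
    _ = ‖ξ‖ * (‖y - x‖ ^ 1 * KA β r p x y) := by ring
    _ ≤ ‖ξ‖ * (heatC d β r 1 * p y) := by
        exact mul_le_mul_of_nonneg_left h2 (norm_nonneg ξ)
    _ = ‖ξ‖ * heatC d β r 1 * p y := by ring

lemma int_KA_inner2 (hβ : 0 < β) (hr : 0 < r) (hpc : Continuous p) (hpp : ∀ y, 0 < p y)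
    (hpi : Integrable p) (x v ξ : EuclideanSpace ℝ (Fin d)) :
    Integrable fun y => KA β r p x y * ⟪ξ, y - v⟫ ^ 2 := by
  refine (hpi.const_mul (‖ξ‖ ^ 2 * (2 * heatC d β r 2 + 2 * ‖x - v‖ ^ 2 * heatC d β r 0))).mono'
    ((KA_cont_y hpc x).mul (((continuous_const.inner
      (continuous_id.sub continuous_const))).pow 2)).aestronglyMeasurable ?_
  filter_upwards with y
  have hK := le_of_lt (KA_pos hβ hr hpp x y)
  rw [Real.norm_eq_abs, abs_mul, abs_of_nonneg hK, abs_of_nonneg (sq_nonneg _)]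
  have h1 : |⟪ξ, y - v⟫| ≤ ‖ξ‖ * ‖y - v‖ := abs_real_inner_le_norm ξ (y - v)
  have h2 : ⟪ξ, y - v⟫ ^ 2 ≤ ‖ξ‖ ^ 2 * ‖y - v‖ ^ 2 := inner_sq_le ξ (y - v)
  have h3 : ‖y - v‖ ^ 2 ≤ 2 * ‖y - x‖ ^ 2 + 2 * ‖x - v‖ ^ 2 := by
    have h4 : ‖y - v‖ ≤ ‖y - x‖ + ‖x - v‖ := norm_sub_le_norm_sub_add_norm_sub y x v
    nlinarith [sq_nonneg (‖y - x‖ - ‖x - v‖), mul_self_le_mul_self (norm_nonneg (y - v)) h4]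
  have h5 := KA_bound hβ hr hpp 2 x y
  have h6 := KA_bound hβ hr hpp 0 x y
  simp only [pow_zero, one_mul] at h6
  calc KA β r p x y * ⟪ξ, y - v⟫ ^ 2 ≤ KA β r p x y * (‖ξ‖ ^ 2 * ‖y - v‖ ^ 2) :=
        mul_le_mul_of_nonneg_left h2 hK
    _ ≤ KA β r p x y * (‖ξ‖ ^ 2 * (2 * ‖y - x‖ ^ 2 + 2 * ‖x - v‖ ^ 2)) := by
        refine mul_le_mul_of_nonneg_left ?_ hK
        exact mul_le_mul_of_nonneg_left h3 (sq_nonneg _)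
    _ = ‖ξ‖ ^ 2 * (2 * (‖y - x‖ ^ 2 * KA β r p x y) + 2 * ‖x - v‖ ^ 2 * KA β r p x y) := by ring
    _ ≤ ‖ξ‖ ^ 2 * (2 * (heatC d β r 2 * p y) + 2 * ‖x - v‖ ^ 2 * (heatC d β r 0 * p y)) := by
        refine mul_le_mul_of_nonneg_left ?_ (sq_nonneg _)
        have hxv : (0:ℝ) ≤ 2 * ‖x - v‖ ^ 2 := by positivity
        have := mul_le_mul_of_nonneg_left h6 hxv
        nlinarith [h5]
    _ = ‖ξ‖ ^ 2 * (2 * heatC d β r 2 + 2 * ‖x - v‖ ^ 2 * heatC d β r 0) * p y := by ring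

lemma int_KA_norm2 (hβ : 0 < β) (hr : 0 < r) (hpc : Continuous p) (hpp : ∀ y, 0 < p y)
    (hpi : Integrable p) (x v : EuclideanSpace ℝ (Fin d)) :
    Integrable fun y => KA β r p x y * ‖y - v‖ ^ 2 := by
  refine (hpi.const_mul (2 * heatC d β r 2 + 2 * ‖x - v‖ ^ 2 * heatC d β r 0)).mono'
    ((KA_cont_y hpc x).mul (((continuous_id.sub continuous_const).norm).pow 2)).aestronglyMeasurable ?_
  filter_upwards with y
  have hK := le_of_lt (KA_pos hβ hr hpp x y)
  rw [Real.norm_eq_abs, abs_mul, abs_of_nonneg hK, abs_of_nonneg (sq_nonneg _)]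
  have h3 : ‖y - v‖ ^ 2 ≤ 2 * ‖y - x‖ ^ 2 + 2 * ‖x - v‖ ^ 2 := by
    have h4 : ‖y - v‖ ≤ ‖y - x‖ + ‖x - v‖ := norm_sub_le_norm_sub_add_norm_sub y x v
    nlinarith [sq_nonneg (‖y - x‖ - ‖x - v‖), mul_self_le_mul_self (norm_nonneg (y - v)) h4]
  have h5 := KA_bound hβ hr hpp 2 x y
  have h6 := KA_bound hβ hr hpp 0 x y
  simp only [pow_zero, one_mul] at h6
  have hxv : (0:ℝ) ≤ 2 * ‖x - v‖ ^ 2 := by positivity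
  nlinarith [mul_le_mul_of_nonneg_left h3 hK, mul_le_mul_of_nonneg_left h6 hxv]

end Abstract
set_option maxHeartbeats 1000000
set_option synthInstance.maxHeartbeats 400000
section Abstract2
variable {d : ℕ} {β r : ℝ} {p : EuclideanSpace ℝ (Fin d) → ℝ}

lemma hA_pos (hβ : 0 < β) (hr : 0 < r) (hpc : Continuous p) (hpp : ∀ y, 0 < p y)
    (hpi : Integrable p) (x : EuclideanSpace ℝ (Fin d)) : 0 < hA β r p x := by
  unfold hA
  rw [integral_pos_iff_support_of_nonneg (fun y => le_of_lt (KA_pos hβ hr hpp x y))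
    (int_KA hβ hr hpc hpp hpi x)]
  have : (Function.support fun y => KA β r p x y) = Set.univ := by
    ext y; simp [Function.mem_support, ne_of_gt (KA_pos hβ hr hpp x y)]
  rw [this]
  exact isOpen_univ.measure_pos volume ⟨0, trivial⟩

lemma hA_cont (hβ : 0 < β) (hr : 0 < r) (hpc : Continuous p) (hpp : ∀ y, 0 < p y)
    (hpi : Integrable p) : Continuous (hA β r p) := by
  unfold hA
  refine continuous_of_dominated (fun x => (KA_cont_y hpc x).aestronglyMeasurable)
    (fun x => ?_) (hpi.const_mul (heatC d β r 0)) ?_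
  · filter_upwards with y
    rw [Real.norm_of_nonneg (le_of_lt (KA_pos hβ hr hpp x y))]
    simpa using KA_bound hβ hr hpp 0 x y
  · filter_upwards with y
    exact KA_cont_x hpc y

lemma wA_cont (hβ : 0 < β) (hr : 0 < r) (hpc : Continuous p) (hpp : ∀ y, 0 < p y)
    (hpi : Integrable p) : Continuous (wA β r p) := by
  unfold wA
  refine continuous_of_dominated (fun x => ((KA_cont_y hpc x).smul
      (continuous_id.sub continuous_const)).aestronglyMeasurable)
    (fun x => ?_) (hpi.const_mul (heatC d β r 1)) ?_
  · filter_upwards with y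
    rw [norm_smul, Real.norm_of_nonneg (le_of_lt (KA_pos hβ hr hpp x y))]
    have := KA_bound hβ hr hpp 1 x y
    calc KA β r p x y * ‖y - x‖ = ‖y - x‖ ^ 1 * KA β r p x y := by ring
      _ ≤ heatC d β r 1 * p y := this
  · filter_upwards with y
    exact (KA_cont_x hpc y).smul (continuous_const.sub continuous_id)

lemma QA_cont (hβ : 0 < β) (hr : 0 < r) (hpc : Continuous p) (hpp : ∀ y, 0 < p y)
    (hpi : Integrable p) (ξ : EuclideanSpace ℝ (Fin d)) : Continuous (QA β r p ξ) := by
  unfold QA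
  refine continuous_of_dominated (fun x => ((KA_cont_y hpc x).mul (((continuous_const.inner
      (continuous_id.sub continuous_const))).pow 2)).aestronglyMeasurable)
    (fun x => ?_) (hpi.const_mul (‖ξ‖ ^ 2 * (2 * heatC d β r 2))) ?_
  · filter_upwards with y
    have hK := le_of_lt (KA_pos hβ hr hpp x y)
    rw [Real.norm_eq_abs, abs_mul, abs_of_nonneg hK, abs_of_nonneg (sq_nonneg _)]
    have h2 : ⟪ξ, y - x⟫ ^ 2 ≤ ‖ξ‖ ^ 2 * ‖y - x‖ ^ 2 := inner_sq_le ξ (y - x)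
    have h5 := KA_bound hβ hr hpp 2 x y
    nlinarith [mul_le_mul_of_nonneg_left h2 hK, sq_nonneg ‖ξ‖]
  · filter_upwards with y
    refine (KA_cont_x hpc y).mul ?_
    exact ((continuous_const.inner (continuous_const.sub continuous_id))).pow 2

lemma hasFDerivAt_hA (hβ : 0 < β) (hr : 0 < r) (hpc : Continuous p) (hpp : ∀ y, 0 < p y)
    (hpi : Integrable p) (x : EuclideanSpace ℝ (Fin d)) :
    HasFDerivAt (hA β r p) (innerSL ℝ ((2 * β * r)⁻¹ • wA β r p x)) x := by
  have hint : ∀ x : EuclideanSpace ℝ (Fin d),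
      Integrable fun y => ((2 * β * r)⁻¹ * KA β r p x y) • innerSL ℝ (y - x) := by
    intro x
    refine (hpi.const_mul ((2 * β * r)⁻¹ * heatC d β r 1)).mono' ?_ ?_
    · apply Continuous.aestronglyMeasurable
      exact (continuous_const.mul (KA_cont_y hpc x)).smul
        ((innerSL ℝ).continuous.comp (continuous_id.sub continuous_const))
    · filter_upwards with y
      rw [norm_smul ((2 * β * r)⁻¹ * KA β r p x y) ((innerSL ℝ) (y - x)),
        innerSL_apply_norm, Real.norm_eq_abs, abs_mul,
        abs_of_nonneg (le_of_lt (KA_pos hβ hr hpp x y)),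
        abs_of_nonneg (by positivity : (0:ℝ) ≤ (2 * β * r)⁻¹)]
      have := KA_bound hβ hr hpp 1 x y
      have h0 : (0:ℝ) ≤ (2 * β * r)⁻¹ := by positivity
      calc (2 * β * r)⁻¹ * KA β r p x y * ‖y - x‖
          = (2 * β * r)⁻¹ * (‖y - x‖ ^ 1 * KA β r p x y) := by ring
        _ ≤ (2 * β * r)⁻¹ * (heatC d β r 1 * p y) := mul_le_mul_of_nonneg_left this h0
        _ = (2 * β * r)⁻¹ * heatC d β r 1 * p y := by ring
  have key : HasFDerivAt (hA β r p)
      (∫ y, ((2 * β * r)⁻¹ * KA β r p x y) • innerSL ℝ (y - x)) x := by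
    refine hasFDerivAt_integral_of_dominated_of_fderiv_le
      (F := fun x y => KA β r p x y)
      (F' := fun x y => ((2 * β * r)⁻¹ * KA β r p x y) • innerSL ℝ (y - x))
      (bound := fun y => (2 * β * r)⁻¹ * heatC d β r 1 * p y)
      Filter.univ_mem ?_ (int_KA hβ hr hpc hpp hpi x) ((hint x).aestronglyMeasurable) ?_
      ((hpi.const_mul _)) ?_
    · filter_upwards with x' using (KA_cont_y hpc x').aestronglyMeasurable
    · filter_upwards with y
      intro x' _
      rw [norm_smul ((2 * β * r)⁻¹ * KA β r p x' y) ((innerSL ℝ) (y - x')),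
        innerSL_apply_norm, Real.norm_eq_abs, abs_mul,
        abs_of_nonneg (le_of_lt (KA_pos hβ hr hpp x' y)),
        abs_of_nonneg (by positivity : (0:ℝ) ≤ (2 * β * r)⁻¹)]
      have := KA_bound hβ hr hpp 1 x' y
      have h0 : (0:ℝ) ≤ (2 * β * r)⁻¹ := by positivity
      calc (2 * β * r)⁻¹ * KA β r p x' y * ‖y - x'‖
          = (2 * β * r)⁻¹ * (‖y - x'‖ ^ 1 * KA β r p x' y) := by ring
        _ ≤ (2 * β * r)⁻¹ * (heatC d β r 1 * p y) := mul_le_mul_of_nonneg_left this h0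
        _ = (2 * β * r)⁻¹ * heatC d β r 1 * p y := by ring
    · filter_upwards with y
      intro x' _
      have h := (hasFDerivAt_heatK hβ hr y x').mul_const (p y)
      refine h.congr_fderiv ?_
      ext ξ
      simp only [ContinuousLinearMap.smul_apply, innerSL_apply_apply, smul_eq_mul,
        ContinuousLinearMap.coe_smul', Pi.smul_apply, KA]
      ring
  convert key using 1
  have heq : (fun y => ((2 * β * r)⁻¹ * KA β r p x y) • innerSL ℝ (y - x)) =
      fun y => innerSL ℝ (((2 * β * r)⁻¹ * KA β r p x y) • (y - x)) := by
    funext y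
    exact ((innerSL ℝ).map_smul _ _).symm
  rw [heq, ContinuousLinearMap.integral_comp_comm (innerSL ℝ)]
  · congr 1
    unfold wA
    rw [← integral_smul]
    congr 1
    funext y
    rw [smul_smul]
  · refine (hpi.const_mul ((2 * β * r)⁻¹ * heatC d β r 1)).mono' ?_ ?_
    · apply Continuous.aestronglyMeasurable
      exact (continuous_const.mul (KA_cont_y hpc x)).smul (continuous_id.sub continuous_const)
    · filter_upwards with y
      rw [norm_smul, Real.norm_eq_abs, abs_mul,
        abs_of_nonneg (le_of_lt (KA_pos hβ hr hpp x y)),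
        abs_of_nonneg (by positivity : (0:ℝ) ≤ (2 * β * r)⁻¹)]
      have := KA_bound hβ hr hpp 1 x y
      have h0 : (0:ℝ) ≤ (2 * β * r)⁻¹ := by positivity
      calc (2 * β * r)⁻¹ * KA β r p x y * ‖y - x‖
          = (2 * β * r)⁻¹ * (‖y - x‖ ^ 1 * KA β r p x y) := by ring
        _ ≤ (2 * β * r)⁻¹ * (heatC d β r 1 * p y) := mul_le_mul_of_nonneg_left this h0
        _ = (2 * β * r)⁻¹ * heatC d β r 1 * p y := by ring

end Abstract2
set_option maxHeartbeats 1000000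
set_option synthInstance.maxHeartbeats 400000
section Abstract3
variable {d : ℕ} {β r : ℝ} {p : EuclideanSpace ℝ (Fin d) → ℝ}

lemma hasFDerivAt_KA (hβ : 0 < β) (hr : 0 < r) (y x : EuclideanSpace ℝ (Fin d)) :
    HasFDerivAt (fun x => KA β r p x y)
      (((2 * β * r)⁻¹ * KA β r p x y) • innerSL ℝ (y - x)) x := by
  have h := (hasFDerivAt_heatK hβ hr y x).mul_const (p y)
  refine h.congr_fderiv ?_
  ext ξ
  simp only [ContinuousLinearMap.smul_apply, innerSL_apply_apply, smul_eq_mul,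
    ContinuousLinearMap.coe_smul', Pi.smul_apply, KA]
  ring

/-- second-moment operator -/
def SA (β r : ℝ) (p : EuclideanSpace ℝ (Fin d) → ℝ) (x : EuclideanSpace ℝ (Fin d)) :
    EuclideanSpace ℝ (Fin d) →L[ℝ] EuclideanSpace ℝ (Fin d) :=
  ∫ y, KA β r p x y • ((innerSL ℝ (y - x)).smulRight (y - x))

lemma smulRight_cont (x : EuclideanSpace ℝ (Fin d)) :
    Continuous fun y : EuclideanSpace ℝ (Fin d) =>
      (innerSL ℝ (y - x)).smulRight (y - x) := by
  have hb := (ContinuousLinearMap.smulRightL ℝ (EuclideanSpace ℝ (Fin d))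
    (EuclideanSpace ℝ (Fin d))).continuous₂
  have h1 : Continuous fun y : EuclideanSpace ℝ (Fin d) =>
      ((innerSL ℝ (y - x) : EuclideanSpace ℝ (Fin d) →L[ℝ] ℝ), y - x) :=
    (((innerSL ℝ).continuous.comp (continuous_id.sub continuous_const))).prodMk
      (continuous_id.sub continuous_const)
  exact hb.comp h1

lemma SA_integrand_cont (hpc : Continuous p) (x : EuclideanSpace ℝ (Fin d)) :
    Continuous fun y => KA β r p x y • ((innerSL ℝ (y - x)).smulRight (y - x)) :=
  (KA_cont_y hpc x).smul (smulRight_cont x)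

lemma SA_integrand_norm (hβ : 0 < β) (hr : 0 < r) (hpp : ∀ y, 0 < p y)
    (x y : EuclideanSpace ℝ (Fin d)) :
    ‖KA β r p x y • ((innerSL ℝ (y - x)).smulRight (y - x))‖ ≤ heatC d β r 2 * p y := by
  rw [norm_smul (KA β r p x y) ((innerSL ℝ (y - x)).smulRight (y - x)),
    ContinuousLinearMap.norm_smulRight_apply, innerSL_apply_norm,
    Real.norm_of_nonneg (le_of_lt (KA_pos hβ hr hpp x y))]
  have := KA_bound hβ hr hpp 2 x y
  calc KA β r p x y * (‖y - x‖ * ‖y - x‖) = ‖y - x‖ ^ 2 * KA β r p x y := by ring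
    _ ≤ heatC d β r 2 * p y := this

lemma SA_int (hβ : 0 < β) (hr : 0 < r) (hpc : Continuous p) (hpp : ∀ y, 0 < p y)
    (hpi : Integrable p) (x : EuclideanSpace ℝ (Fin d)) :
    Integrable fun y => KA β r p x y • ((innerSL ℝ (y - x)).smulRight (y - x)) := by
  refine (hpi.const_mul (heatC d β r 2)).mono'
    (SA_integrand_cont hpc x).aestronglyMeasurable ?_
  filter_upwards with y using SA_integrand_norm hβ hr hpp x y

lemma SA_apply (hβ : 0 < β) (hr : 0 < r) (hpc : Continuous p) (hpp : ∀ y, 0 < p y)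
    (hpi : Integrable p) (x ξ : EuclideanSpace ℝ (Fin d)) :
    SA β r p x ξ = ∫ y, (KA β r p x y * ⟪y - x, ξ⟫) • (y - x) := by
  unfold SA
  rw [ContinuousLinearMap.integral_apply (SA_int hβ hr hpc hpp hpi x)]
  congr 1
  funext y
  simp only [ContinuousLinearMap.smul_apply, ContinuousLinearMap.smulRight_apply, innerSL_apply_apply]
  rw [smul_smul]

lemma int_inner_smul (hβ : 0 < β) (hr : 0 < r) (hpc : Continuous p) (hpp : ∀ y, 0 < p y)
    (hpi : Integrable p) (x ξ : EuclideanSpace ℝ (Fin d)) :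
    Integrable fun y => (KA β r p x y * ⟪y - x, ξ⟫) • (y - x) := by
  refine (hpi.const_mul (‖ξ‖ * heatC d β r 2)).mono' ?_ ?_
  · apply Continuous.aestronglyMeasurable
    exact ((KA_cont_y hpc x).mul ((continuous_id.sub continuous_const).inner
      continuous_const)).smul (continuous_id.sub continuous_const)
  · filter_upwards with y
    have hK := le_of_lt (KA_pos hβ hr hpp x y)
    rw [norm_smul, Real.norm_eq_abs, abs_mul, abs_of_nonneg hK]
    have h1 : |⟪y - x, ξ⟫| ≤ ‖y - x‖ * ‖ξ‖ := abs_real_inner_le_norm (y - x) ξ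
    have h2 := KA_bound hβ hr hpp 2 x y
    have hnn : (0 : ℝ) ≤ ‖y - x‖ := norm_nonneg _
    calc KA β r p x y * |⟪y - x, ξ⟫| * ‖y - x‖
        ≤ KA β r p x y * (‖y - x‖ * ‖ξ‖) * ‖y - x‖ := by
          have := mul_le_mul_of_nonneg_left h1 hK
          exact mul_le_mul_of_nonneg_right this hnn
      _ = ‖ξ‖ * (‖y - x‖ ^ 2 * KA β r p x y) := by ring
      _ ≤ ‖ξ‖ * (heatC d β r 2 * p y) := mul_le_mul_of_nonneg_left h2 (norm_nonneg ξ)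
      _ = ‖ξ‖ * heatC d β r 2 * p y := by ring

lemma inner_SA (hβ : 0 < β) (hr : 0 < r) (hpc : Continuous p) (hpp : ∀ y, 0 < p y)
    (hpi : Integrable p) (x ξ : EuclideanSpace ℝ (Fin d)) :
    ⟪ξ, SA β r p x ξ⟫ = QA β r p ξ x := by
  rw [SA_apply hβ hr hpc hpp hpi x ξ,
    ← integral_inner (int_inner_smul hβ hr hpc hpp hpi x ξ) ξ]
  unfold QA
  congr 1
  funext y
  rw [real_inner_smul_right]
  rw [real_inner_comm (y - x) ξ]
  ring

lemma inner_wA (hβ : 0 < β) (hr : 0 < r) (hpc : Continuous p) (hpp : ∀ y, 0 < p y)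
    (hpi : Integrable p) (x ξ : EuclideanSpace ℝ (Fin d)) :
    ⟪ξ, wA β r p x⟫ = ∫ y, KA β r p x y * ⟪ξ, y - x⟫ := by
  unfold wA
  rw [← integral_inner (int_KA_smul hβ hr hpc hpp hpi x) ξ]
  congr 1
  funext y
  rw [real_inner_smul_right]

lemma hasFDerivAt_wA (hβ : 0 < β) (hr : 0 < r) (hpc : Continuous p) (hpp : ∀ y, 0 < p y)
    (hpi : Integrable p) (x : EuclideanSpace ℝ (Fin d)) :
    HasFDerivAt (wA β r p)
      ((2 * β * r)⁻¹ • SA β r p x - hA β r p x • ContinuousLinearMap.id ℝ _) x := by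
  set F' : EuclideanSpace ℝ (Fin d) → EuclideanSpace ℝ (Fin d) →
      EuclideanSpace ℝ (Fin d) →L[ℝ] EuclideanSpace ℝ (Fin d) :=
    fun x y => ((2 * β * r)⁻¹ * KA β r p x y) • ((innerSL ℝ (y - x)).smulRight (y - x))
      - KA β r p x y • ContinuousLinearMap.id ℝ _ with hF'
  have hc2 : (0:ℝ) ≤ (2 * β * r)⁻¹ := by positivity
  have hbd : ∀ x' y, ‖F' x' y‖ ≤ ((2 * β * r)⁻¹ * heatC d β r 2 + heatC d β r 0) * p y := by
    intro x' y
    have hK := le_of_lt (KA_pos hβ hr hpp x' y)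
    have h1 := SA_integrand_norm hβ hr hpp x' y
    have h2 : ‖KA β r p x' y • ContinuousLinearMap.id ℝ (EuclideanSpace ℝ (Fin d))‖
        ≤ heatC d β r 0 * p y := by
      rw [norm_smul (KA β r p x' y) (ContinuousLinearMap.id ℝ (EuclideanSpace ℝ (Fin d))),
        Real.norm_of_nonneg hK]
      have h6 := KA_bound hβ hr hpp 0 x' y
      simp only [pow_zero, one_mul] at h6
      calc KA β r p x' y * ‖ContinuousLinearMap.id ℝ (EuclideanSpace ℝ (Fin d))‖
          ≤ KA β r p x' y * 1 := by
            exact mul_le_mul_of_nonneg_left ContinuousLinearMap.norm_id_le hK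
        _ ≤ heatC d β r 0 * p y := by rw [mul_one]; exact h6
    calc ‖F' x' y‖ ≤ ‖((2 * β * r)⁻¹ * KA β r p x' y) •
          ((innerSL ℝ (y - x')).smulRight (y - x'))‖
          + ‖KA β r p x' y • ContinuousLinearMap.id ℝ (EuclideanSpace ℝ (Fin d))‖ :=
        norm_sub_le _ _
      _ ≤ (2 * β * r)⁻¹ * (heatC d β r 2 * p y) + heatC d β r 0 * p y := by
          refine add_le_add ?_ h2
          rw [norm_smul ((2 * β * r)⁻¹ * KA β r p x' y)
            ((innerSL ℝ (y - x')).smulRight (y - x')), Real.norm_eq_abs, abs_mul,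
            abs_of_nonneg hK, abs_of_nonneg hc2, mul_assoc]
          refine mul_le_mul_of_nonneg_left ?_ hc2
          calc KA β r p x' y * ‖(innerSL ℝ (y - x')).smulRight (y - x')‖
              = ‖KA β r p x' y • ((innerSL ℝ (y - x')).smulRight (y - x'))‖ := by
                rw [norm_smul (KA β r p x' y) ((innerSL ℝ (y - x')).smulRight (y - x')),
                  Real.norm_of_nonneg hK]
            _ ≤ heatC d β r 2 * p y := h1
      _ = ((2 * β * r)⁻¹ * heatC d β r 2 + heatC d β r 0) * p y := by ring
  have hmeasF' : ∀ x', AEStronglyMeasurable (F' x') volume := by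
    intro x'
    apply Continuous.aestronglyMeasurable
    exact ((continuous_const.mul (KA_cont_y hpc x')).smul (smulRight_cont x')).sub
      ((KA_cont_y hpc x').smul continuous_const)
  have key : HasFDerivAt (wA β r p) (∫ y, F' x y) x := by
    refine hasFDerivAt_integral_of_dominated_of_fderiv_le
      (F := fun x y => KA β r p x y • (y - x)) (F' := F')
      (bound := fun y => ((2 * β * r)⁻¹ * heatC d β r 2 + heatC d β r 0) * p y)
      Filter.univ_mem ?_ (int_KA_smul hβ hr hpc hpp hpi x) (hmeasF' x) ?_
      (hpi.const_mul _) ?_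
    · filter_upwards with x' using ((KA_cont_y hpc x').smul
        (continuous_id.sub continuous_const)).aestronglyMeasurable
    · filter_upwards with y using fun x' _ => hbd x' y
    · filter_upwards with y
      intro x' _
      have hKd := hasFDerivAt_KA (p := p) hβ hr y x'
      have hvd : HasFDerivAt (fun x : EuclideanSpace ℝ (Fin d) => y - x)
          (-(ContinuousLinearMap.id ℝ (EuclideanSpace ℝ (Fin d)))) x' :=
        (hasFDerivAt_id x').const_sub y
      have := hKd.smul hvd
      refine this.congr_fderiv ?_
      refine ContinuousLinearMap.ext fun ξ => ?_
      simp only [hF', ContinuousLinearMap.sub_apply, ContinuousLinearMap.smul_apply,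
        ContinuousLinearMap.smulRight_apply, innerSL_apply_apply, ContinuousLinearMap.coe_id', id_eq,
        ContinuousLinearMap.add_apply, ContinuousLinearMap.neg_apply, smul_eq_mul]
      module
  have hrw : (∫ y, F' x y) = (2 * β * r)⁻¹ • SA β r p x
      - hA β r p x • ContinuousLinearMap.id ℝ (EuclideanSpace ℝ (Fin d)) := by
    have hi1 : Integrable fun y => ((2 * β * r)⁻¹ * KA β r p x y) •
        ((innerSL ℝ (y - x)).smulRight (y - x)) := by
      refine (hpi.const_mul ((2 * β * r)⁻¹ * heatC d β r 2)).mono' ?_ ?_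
      · exact ((continuous_const.mul (KA_cont_y hpc x)).smul
          (smulRight_cont x)).aestronglyMeasurable
      · filter_upwards with y
        have h1 := SA_integrand_norm hβ hr hpp x y
        have hK := le_of_lt (KA_pos hβ hr hpp x y)
        have hc2 : (0:ℝ) ≤ (2 * β * r)⁻¹ := by positivity
        rw [norm_smul ((2 * β * r)⁻¹ * KA β r p x y) ((innerSL ℝ (y - x)).smulRight (y - x)),
          Real.norm_eq_abs, abs_mul, abs_of_nonneg hK, abs_of_nonneg hc2]
        have hmid : KA β r p x y * ‖(innerSL ℝ (y - x)).smulRight (y - x)‖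
            ≤ heatC d β r 2 * p y := by
          calc KA β r p x y * ‖(innerSL ℝ (y - x)).smulRight (y - x)‖
              = ‖KA β r p x y • ((innerSL ℝ (y - x)).smulRight (y - x))‖ := by
                rw [norm_smul (KA β r p x y) ((innerSL ℝ (y - x)).smulRight (y - x)),
                  Real.norm_of_nonneg hK]
            _ ≤ heatC d β r 2 * p y := h1
        calc (2 * β * r)⁻¹ * KA β r p x y * ‖(innerSL ℝ (y - x)).smulRight (y - x)‖
            = (2 * β * r)⁻¹ * (KA β r p x y * ‖(innerSL ℝ (y - x)).smulRight (y - x)‖) := by ring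
          _ ≤ (2 * β * r)⁻¹ * (heatC d β r 2 * p y) := mul_le_mul_of_nonneg_left hmid hc2
          _ = (2 * β * r)⁻¹ * heatC d β r 2 * p y := by ring
    have hi2 : Integrable fun y => KA β r p x y •
        ContinuousLinearMap.id ℝ (EuclideanSpace ℝ (Fin d)) :=
      (int_KA hβ hr hpc hpp hpi x).smul_const _
    rw [hF']
    rw [integral_sub hi1 hi2]
    congr 1
    · unfold SA
      rw [← integral_smul]
      congr 1
      funext y
      exact (smul_smul _ _ _).symm
    · rw [integral_smul_const]
      rfl
  rw [← hrw]
  exact key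

end Abstract3
section Abstract4
variable {d : ℕ} {β r : ℝ} {p : EuclideanSpace ℝ (Fin d) → ℝ}

def gradPhiA (β r : ℝ) (p : EuclideanSpace ℝ (Fin d) → ℝ) (x : EuclideanSpace ℝ (Fin d)) :
    EuclideanSpace ℝ (Fin d) :=
  (-(r * hA β r p x)⁻¹) • wA β r p x

def LA (β r : ℝ) (p : EuclideanSpace ℝ (Fin d) → ℝ) (x : EuclideanSpace ℝ (Fin d)) :
    EuclideanSpace ℝ (Fin d) →L[ℝ] EuclideanSpace ℝ (Fin d) :=
  (-(r * hA β r p x)⁻¹) • ((2 * β * r)⁻¹ • SA β r p x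
      - hA β r p x • ContinuousLinearMap.id ℝ _)
    + ((((r * hA β r p x) ^ 2)⁻¹ * r * (2 * β * r)⁻¹) •
        innerSL ℝ (wA β r p x)).smulRight (wA β r p x)

lemma hasFDerivAt_coeff (hβ : 0 < β) (hr : 0 < r) (hpc : Continuous p) (hpp : ∀ y, 0 < p y)
    (hpi : Integrable p) (x : EuclideanSpace ℝ (Fin d)) :
    HasFDerivAt (fun x => -(r * hA β r p x)⁻¹)
      ((((r * hA β r p x) ^ 2)⁻¹ * r * (2 * β * r)⁻¹) • innerSL ℝ (wA β r p x)) x := by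
  have hne : r * hA β r p x ≠ 0 := by
    have := hA_pos hβ hr hpc hpp hpi x
    positivity
  have h1 : HasFDerivAt (fun x => r * hA β r p x)
      (r • innerSL ℝ ((2 * β * r)⁻¹ • wA β r p x)) x :=
    (hasFDerivAt_hA hβ hr hpc hpp hpi x).const_mul r
  have h2 := ((hasDerivAt_inv hne).comp_hasFDerivAt x h1).neg
  refine h2.congr_fderiv ?_
  refine ContinuousLinearMap.ext fun ξ => ?_
  simp only [ContinuousLinearMap.smul_apply, innerSL_apply_apply, smul_eq_mul,
    ContinuousLinearMap.coe_smul', Pi.smul_apply, ContinuousLinearMap.neg_apply,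
    inner_smul_left, map_inv₀, RCLike.inner_apply, conj_trivial]
  ring

lemma hasFDerivAt_gradPhiA (hβ : 0 < β) (hr : 0 < r) (hpc : Continuous p) (hpp : ∀ y, 0 < p y)
    (hpi : Integrable p) (x : EuclideanSpace ℝ (Fin d)) :
    HasFDerivAt (gradPhiA β r p) (LA β r p x) x := by
  have h1 := (hasFDerivAt_coeff hβ hr hpc hpp hpi x).smul (hasFDerivAt_wA hβ hr hpc hpp hpi x)
  exact h1

lemma LA_inner (hβ : 0 < β) (hr : 0 < r) (hpc : Continuous p) (hpp : ∀ y, 0 < p y)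
    (hpi : Integrable p) (x ξ : EuclideanSpace ℝ (Fin d)) :
    ⟪ξ, LA β r p x ξ⟫
      = (-(r * hA β r p x)⁻¹) *
          ((2 * β * r)⁻¹ * QA β r p ξ x - hA β r p x * ‖ξ‖ ^ 2)
        + (((r * hA β r p x) ^ 2)⁻¹ * r * (2 * β * r)⁻¹) * ⟪ξ, wA β r p x⟫ ^ 2 := by
  unfold LA
  rw [ContinuousLinearMap.add_apply, inner_add_right]
  congr 1
  · rw [ContinuousLinearMap.smul_apply, real_inner_smul_right,
      ContinuousLinearMap.sub_apply, inner_sub_right,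
      ContinuousLinearMap.smul_apply, real_inner_smul_right,
      ContinuousLinearMap.smul_apply, ContinuousLinearMap.coe_id', id_eq,
      real_inner_smul_right, inner_SA hβ hr hpc hpp hpi x ξ, real_inner_self_eq_norm_sq]
  · rw [ContinuousLinearMap.smulRight_apply, ContinuousLinearMap.smul_apply,
      real_inner_smul_right, innerSL_apply_apply]
    have hcomm : ⟪wA β r p x, ξ⟫ = ⟪ξ, wA β r p x⟫ := real_inner_comm _ _
    rw [smul_eq_mul, hcomm]
    ring

lemma LA_inner_cont (hβ : 0 < β) (hr : 0 < r) (hpc : Continuous p) (hpp : ∀ y, 0 < p y)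
    (hpi : Integrable p) (ξ : EuclideanSpace ℝ (Fin d)) :
    Continuous fun x => ⟪ξ, LA β r p x ξ⟫ := by
  have heq : (fun x => ⟪ξ, LA β r p x ξ⟫)
      = fun x => (-(r * hA β r p x)⁻¹) *
          ((2 * β * r)⁻¹ * QA β r p ξ x - hA β r p x * ‖ξ‖ ^ 2)
        + (((r * hA β r p x) ^ 2)⁻¹ * r * (2 * β * r)⁻¹) * ⟪ξ, wA β r p x⟫ ^ 2 := by
    funext x; exact LA_inner hβ hr hpc hpp hpi x ξ
  rw [heq]
  have hc := hA_cont hβ hr hpc hpp hpi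
  have hwc := wA_cont hβ hr hpc hpp hpi
  have hQc := QA_cont hβ hr hpc hpp hpi ξ
  have hne : ∀ x, (r * hA β r p x) ^ 2 ≠ 0 := fun x => by
    have := hA_pos hβ hr hpc hpp hpi x; positivity
  have hne2 : ∀ x, r * hA β r p x ≠ 0 := fun x => by
    have := hA_pos hβ hr hpc hpp hpi x; positivity
  refine Continuous.add ?_ ?_
  · exact (((continuous_const.mul hc).inv₀ hne2).neg).mul
      ((continuous_const.mul hQc).sub (hc.mul continuous_const))
  · exact ((((continuous_const.mul hc).pow 2).inv₀ hne).mul continuous_const |>.mul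
      continuous_const).mul ((continuous_const.inner hwc).pow 2)

lemma key_pointwise (hβ : 0 < β) (hr : 0 < r) (hpc : Continuous p) (hpp : ∀ y, 0 < p y)
    (hpi : Integrable p) (x ξ : EuclideanSpace ℝ (Fin d)) :
    ‖ξ‖ ^ 2 - r * ⟪ξ, LA β r p x ξ⟫
      = (2 * β * r)⁻¹ *
        ((hA β r p x)⁻¹ * QA β r p ξ x - ((hA β r p x)⁻¹ * ⟪ξ, wA β r p x⟫) ^ 2) := by
  rw [LA_inner hβ hr hpc hpp hpi x ξ]
  have h0 := hA_pos hβ hr hpc hpp hpi x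
  have hne : hA β r p x ≠ 0 := ne_of_gt h0
  have hrne : r ≠ 0 := ne_of_gt hr
  have hβne : β ≠ 0 := ne_of_gt hβ
  field_simp
  ring

end Abstract4
section Abstract5
variable {d : ℕ} {β r : ℝ} {p : EuclideanSpace ℝ (Fin d) → ℝ}

def etaA (β r : ℝ) (p : EuclideanSpace ℝ (Fin d) → ℝ) (x y : EuclideanSpace ℝ (Fin d)) : ℝ :=
  KA β r p x y / hA β r p x

def aA (β r : ℝ) (p : EuclideanSpace ℝ (Fin d) → ℝ) (x : EuclideanSpace ℝ (Fin d)) :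
    EuclideanSpace ℝ (Fin d) :=
  x + (hA β r p x)⁻¹ • wA β r p x

lemma etaA_nonneg (hβ : 0 < β) (hr : 0 < r) (hpc : Continuous p) (hpp : ∀ y, 0 < p y)
    (hpi : Integrable p) (x y : EuclideanSpace ℝ (Fin d)) : 0 ≤ etaA β r p x y :=
  div_nonneg (le_of_lt (KA_pos hβ hr hpp x y)) (le_of_lt (hA_pos hβ hr hpc hpp hpi x))

lemma inner_sub_aA (x ξ y : EuclideanSpace ℝ (Fin d)) :
    ⟪ξ, y - aA β r p x⟫ = ⟪ξ, y - x⟫ - (hA β r p x)⁻¹ * ⟪ξ, wA β r p x⟫ := by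
  unfold aA
  rw [sub_add_eq_sub_sub, inner_sub_right, real_inner_smul_right]

lemma var_eq (hβ : 0 < β) (hr : 0 < r) (hpc : Continuous p) (hpp : ∀ y, 0 < p y)
    (hpi : Integrable p) (x ξ : EuclideanSpace ℝ (Fin d)) :
    ∫ y, ⟪ξ, y - aA β r p x⟫ ^ 2 * etaA β r p x y
      = (hA β r p x)⁻¹ * QA β r p ξ x - ((hA β r p x)⁻¹ * ⟪ξ, wA β r p x⟫) ^ 2 := by
  set H := hA β r p x with hH
  set m := H⁻¹ * ⟪ξ, wA β r p x⟫ with hm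
  have hHpos := hA_pos hβ hr hpc hpp hpi x
  have hHne : H ≠ 0 := ne_of_gt hHpos
  have hrewrite : (fun y => ⟪ξ, y - aA β r p x⟫ ^ 2 * etaA β r p x y)
      = fun y => H⁻¹ * (KA β r p x y * ⟪ξ, y - x⟫ ^ 2
          - (2 * m) * (KA β r p x y * ⟪ξ, y - x⟫) + m ^ 2 * KA β r p x y) := by
    funext y
    rw [inner_sub_aA, ← hm]
    unfold etaA
    rw [← hH, div_eq_mul_inv]
    ring
  rw [hrewrite, integral_const_mul]
  have hi1 := int_KA_inner2 hβ hr hpc hpp hpi x x ξ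
  have hi2 := (int_KA_inner1 hβ hr hpc hpp hpi x ξ).const_mul (2 * m)
  have hi3 := (int_KA hβ hr hpc hpp hpi x).const_mul (m ^ 2)
  have e1 : (∫ y, (KA β r p x y * ⟪ξ, y - x⟫ ^ 2
          - (2 * m) * (KA β r p x y * ⟪ξ, y - x⟫) + m ^ 2 * KA β r p x y))
      = (∫ y, (KA β r p x y * ⟪ξ, y - x⟫ ^ 2 - (2 * m) * (KA β r p x y * ⟪ξ, y - x⟫)))
        + ∫ y, m ^ 2 * KA β r p x y := integral_add (hi1.sub hi2) hi3
  have e2 : (∫ y, (KA β r p x y * ⟪ξ, y - x⟫ ^ 2 - (2 * m) * (KA β r p x y * ⟪ξ, y - x⟫)))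
      = (∫ y, KA β r p x y * ⟪ξ, y - x⟫ ^ 2)
        - ∫ y, (2 * m) * (KA β r p x y * ⟪ξ, y - x⟫) := integral_sub hi1 hi2
  rw [e1, e2, integral_const_mul, integral_const_mul]
  have hw : (∫ y, KA β r p x y * ⟪ξ, y - x⟫) = ⟪ξ, wA β r p x⟫ :=
    (inner_wA hβ hr hpc hpp hpi x ξ).symm
  have hq : (∫ y, KA β r p x y * ⟪ξ, y - x⟫ ^ 2) = QA β r p ξ x := rfl
  have hh : (∫ y, KA β r p x y) = H := rfl
  rw [hw, hq, hh, hm]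
  field_simp
  ring

lemma int_var (hβ : 0 < β) (hr : 0 < r) (hpc : Continuous p) (hpp : ∀ y, 0 < p y)
    (hpi : Integrable p) (x v ξ : EuclideanSpace ℝ (Fin d)) :
    Integrable fun y => ⟪ξ, y - v⟫ ^ 2 * etaA β r p x y := by
  have h := (int_KA_inner2 hβ hr hpc hpp hpi x v ξ).const_mul (hA β r p x)⁻¹
  refine h.congr ?_
  filter_upwards with y
  unfold etaA
  rw [div_eq_mul_inv]
  ring

lemma int_var_norm (hβ : 0 < β) (hr : 0 < r) (hpc : Continuous p) (hpp : ∀ y, 0 < p y)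
    (hpi : Integrable p) (x v : EuclideanSpace ℝ (Fin d)) :
    Integrable fun y => ‖y - v‖ ^ 2 * etaA β r p x y := by
  have h := (int_KA_norm2 hβ hr hpc hpp hpi x v).const_mul (hA β r p x)⁻¹
  refine h.congr ?_
  filter_upwards with y
  unfold etaA
  rw [div_eq_mul_inv]
  ring

lemma norm_sq_decomp (v : EuclideanSpace ℝ (Fin d)) :
    ‖v‖ ^ 2 = ∑ i : Fin d, ⟪EuclideanSpace.single i (1:ℝ), v⟫ ^ 2 := by
  rw [← real_inner_self_eq_norm_sq]
  rw [PiLp.inner_apply]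
  congr 1
  funext i
  rw [EuclideanSpace.inner_single_left]
  simp [pow_two]

lemma var_norm_decomp (hβ : 0 < β) (hr : 0 < r) (hpc : Continuous p) (hpp : ∀ y, 0 < p y)
    (hpi : Integrable p) (x v : EuclideanSpace ℝ (Fin d)) :
    ∫ y, ‖y - v‖ ^ 2 * etaA β r p x y
      = ∑ i : Fin d, ∫ y, ⟪EuclideanSpace.single i (1:ℝ), y - v⟫ ^ 2 * etaA β r p x y := by
  rw [← integral_finset_sum]
  · congr 1
    funext y
    rw [← Finset.sum_mul]
    congr 1
    exact norm_sq_decomp (y - v)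
  · exact fun i _ => int_var hβ hr hpc hpp hpi x v _

end Abstract5
section Abstract6
variable {d : ℕ} {β r : ℝ} {p : EuclideanSpace ℝ (Fin d) → ℝ}

lemma hasGradientAt_PhiA (hβ : 0 < β) (hr : 0 < r) (hpc : Continuous p) (hpp : ∀ y, 0 < p y)
    (hpi : Integrable p) (x : EuclideanSpace ℝ (Fin d)) :
    HasGradientAt (fun x => -(2 * β) * Real.log (hA β r p x)) (gradPhiA β r p x) x := by
  rw [hasGradientAt_iff_hasFDerivAt]
  have hpos := hA_pos hβ hr hpc hpp hpi x
  have h1 := ((hasFDerivAt_hA hβ hr hpc hpp hpi x).log (ne_of_gt hpos)).const_mul (-(2 * β))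
  refine h1.congr_fderiv ?_
  refine ContinuousLinearMap.ext fun ξ => ?_
  simp only [ContinuousLinearMap.coe_smul', Pi.smul_apply, innerSL_apply_apply, smul_eq_mul,
    InnerProductSpace.toDual_apply_apply]
  rw [real_inner_smul_left]
  unfold gradPhiA
  rw [real_inner_smul_left]
  have hβne : β ≠ 0 := ne_of_gt hβ
  have hrne : r ≠ 0 := ne_of_gt hr
  have hne : hA β r p x ≠ 0 := ne_of_gt hpos
  field_simp

lemma gradient_PhiA (hβ : 0 < β) (hr : 0 < r) (hpc : Continuous p) (hpp : ∀ y, 0 < p y)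
    (hpi : Integrable p) :
    (fun x => gradient (fun z => -(2 * β) * Real.log (hA β r p z)) x) = gradPhiA β r p := by
  funext x
  exact (hasGradientAt_PhiA hβ hr hpc hpp hpi x).gradient

lemma fderiv_gradPhiA (hβ : 0 < β) (hr : 0 < r) (hpc : Continuous p) (hpp : ∀ y, 0 < p y)
    (hpi : Integrable p) (x : EuclideanSpace ℝ (Fin d)) :
    fderiv ℝ (fun z => gradient (fun w => -(2 * β) * Real.log (hA β r p w)) z) x
      = LA β r p x := by
  rw [gradient_PhiA hβ hr hpc hpp hpi]
  exact (hasFDerivAt_gradPhiA hβ hr hpc hpp hpi x).fderiv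

lemma fderiv_PhiA_eq (hβ : 0 < β) (hr : 0 < r) (hpc : Continuous p) (hpp : ∀ y, 0 < p y)
    (hpi : Integrable p) (z ξ : EuclideanSpace ℝ (Fin d)) :
    fderiv ℝ (fun w => -(2 * β) * Real.log (hA β r p w)) z ξ = ⟪gradPhiA β r p z, ξ⟫ := by
  have h := (hasGradientAt_PhiA hβ hr hpc hpp hpi z).hasFDerivAt
  rw [h.fderiv, InnerProductSpace.toDual_apply_apply]

lemma lap_PhiA (hβ : 0 < β) (hr : 0 < r) (hpc : Continuous p) (hpp : ∀ y, 0 < p y)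
    (hpi : Integrable p) (x : EuclideanSpace ℝ (Fin d)) :
    lap (fun w => -(2 * β) * Real.log (hA β r p w)) x
      = ∑ i : Fin d, ⟪EuclideanSpace.single i (1:ℝ),
          LA β r p x (EuclideanSpace.single i (1:ℝ))⟫ := by
  unfold lap
  congr 1
  funext i
  set e := EuclideanSpace.single i (1:ℝ) with he
  have heq : (fun z => fderiv ℝ (fun w => -(2 * β) * Real.log (hA β r p w)) z e)
      = fun z => ⟪e, gradPhiA β r p z⟫ := by
    funext z
    rw [fderiv_PhiA_eq hβ hr hpc hpp hpi z e, real_inner_comm]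
  rw [heq]
  have hc : HasFDerivAt (fun z => ⟪e, gradPhiA β r p z⟫)
      ((innerSL ℝ e).comp (LA β r p x)) x := by
    exact (innerSL ℝ e).hasFDerivAt.comp x (hasFDerivAt_gradPhiA hβ hr hpc hpp hpi x)
  rw [hc.fderiv]
  simp only [ContinuousLinearMap.coe_comp', Function.comp_apply, innerSL_apply_apply]

end Abstract6
section Segment
variable {d : ℕ} {β r : ℝ} {p : EuclideanSpace ℝ (Fin d) → ℝ}

lemma hasDerivAt_seg (x₁ ξ : EuclideanSpace ℝ (Fin d)) (θ : ℝ) :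
    HasDerivAt (fun θ : ℝ => x₁ + θ • ξ) ξ θ := by
  have h := ((hasDerivAt_id θ).smul_const ξ).const_add x₁
  simpa using h

lemma seg_cont (x₁ ξ : EuclideanSpace ℝ (Fin d)) :
    Continuous fun θ : ℝ => x₁ + θ • ξ :=
  continuous_const.add (continuous_id.smul continuous_const)

lemma hasDerivAt_gi (hβ : 0 < β) (hr : 0 < r) (hpc : Continuous p) (hpp : ∀ y, 0 < p y)
    (hpi : Integrable p) (x₁ ξ : EuclideanSpace ℝ (Fin d)) (θ : ℝ) :
    HasDerivAt (fun θ : ℝ => ⟪ξ, gradPhiA β r p (x₁ + θ • ξ)⟫)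
      (⟪ξ, LA β r p (x₁ + θ • ξ) ξ⟫) θ := by
  have h1 : HasDerivAt (fun θ : ℝ => gradPhiA β r p (x₁ + θ • ξ))
      (LA β r p (x₁ + θ • ξ) ξ) θ :=
    (hasFDerivAt_gradPhiA hβ hr hpc hpp hpi (x₁ + θ • ξ)).comp_hasDerivAt (l := gradPhiA β r p) θ
      (hasDerivAt_seg x₁ ξ θ)
  have h2 := (innerSL ℝ ξ).hasFDerivAt.comp_hasDerivAt θ h1
  exact h2

lemma G1_cont (hβ : 0 < β) (hr : 0 < r) (hpc : Continuous p) (hpp : ∀ y, 0 < p y)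
    (hpi : Integrable p) (x₁ ξ : EuclideanSpace ℝ (Fin d)) :
    Continuous fun θ : ℝ => ⟪ξ, LA β r p (x₁ + θ • ξ) ξ⟫ :=
  (LA_inner_cont hβ hr hpc hpp hpi ξ).comp (seg_cont x₁ ξ)

lemma ftc_gi (hβ : 0 < β) (hr : 0 < r) (hpc : Continuous p) (hpp : ∀ y, 0 < p y)
    (hpi : Integrable p) (x₁ ξ : EuclideanSpace ℝ (Fin d)) :
    ∫ θ in (0:ℝ)..1, ⟪ξ, LA β r p (x₁ + θ • ξ) ξ⟫
      = ⟪ξ, gradPhiA β r p (x₁ + ξ)⟫ - ⟪ξ, gradPhiA β r p x₁⟫ := by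
  have h := intervalIntegral.integral_eq_sub_of_hasDerivAt
    (f := fun θ : ℝ => ⟪ξ, gradPhiA β r p (x₁ + θ • ξ)⟫)
    (fun θ _ => hasDerivAt_gi hβ hr hpc hpp hpi x₁ ξ θ)
    ((G1_cont hβ hr hpc hpp hpi x₁ ξ).intervalIntegrable 0 1)
  rw [h]
  norm_num

lemma aA_eq_grad (hβ : 0 < β) (hr : 0 < r) (hpc : Continuous p) (hpp : ∀ y, 0 < p y)
    (hpi : Integrable p) (x : EuclideanSpace ℝ (Fin d)) :
    aA β r p x = x - r • gradPhiA β r p x := by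
  unfold aA gradPhiA
  rw [smul_smul, sub_eq_add_neg, ← neg_smul]
  congr 1
  have h0 := hA_pos hβ hr hpc hpp hpi x
  have : (hA β r p x)⁻¹ = -(r * -(r * hA β r p x)⁻¹) := by
    field_simp
  rw [this]

lemma main_identity_A (hβ : 0 < β) (hr : 0 < r) (hpc : Continuous p) (hpp : ∀ y, 0 < p y)
    (hpi : Integrable p) (x₁ x₂ : EuclideanSpace ℝ (Fin d)) :
    ⟪aA β r p x₂ - aA β r p x₁, x₂ - x₁⟫
      = ∫ θ in (0:ℝ)..1,
          (‖x₂ - x₁‖ ^ 2 - r * ⟪x₂ - x₁, LA β r p (x₁ + θ • (x₂ - x₁)) (x₂ - x₁)⟫) := by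
  set ξ := x₂ - x₁ with hξ
  have hseg1 : x₁ + ξ = x₂ := by rw [hξ]; abel
  have hLHS : ⟪aA β r p x₂ - aA β r p x₁, ξ⟫
      = ‖ξ‖ ^ 2 - r * (⟪ξ, gradPhiA β r p (x₁ + ξ)⟫ - ⟪ξ, gradPhiA β r p x₁⟫) := by
    rw [aA_eq_grad hβ hr hpc hpp hpi x₂, aA_eq_grad hβ hr hpc hpp hpi x₁, hseg1]
    have : x₂ - r • gradPhiA β r p x₂ - (x₁ - r • gradPhiA β r p x₁)
        = ξ - r • (gradPhiA β r p x₂ - gradPhiA β r p x₁) := by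
      rw [hξ, smul_sub]; abel
    rw [this, inner_sub_left, real_inner_self_eq_norm_sq, real_inner_smul_left, inner_sub_left]
    rw [real_inner_comm (gradPhiA β r p x₂) ξ, real_inner_comm (gradPhiA β r p x₁) ξ]
  rw [hLHS, ← ftc_gi hβ hr hpc hpp hpi x₁ ξ]
  rw [intervalIntegral.integral_sub intervalIntegrable_const
    (((G1_cont hβ hr hpc hpp hpi x₁ ξ).intervalIntegrable 0 1).const_mul r)]
  rw [intervalIntegral.integral_const, intervalIntegral.integral_const_mul]
  simp

end Segment
section Concrete
variable {d : ℕ} {T β lam t : ℝ} {f : EuclideanSpace ℝ (Fin d) → ℝ}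

lemma gibbs_cont (hfc : Continuous f) : Continuous (gibbsDen T β lam f) := by
  unfold gibbsDen
  exact (Real.continuous_exp.comp (continuous_const.mul hfc)).div_const _

lemma gibbs_pos (hie : Integrable fun y => Real.exp (-(T / (2 * lam * β)) * f y)) :
    ∀ y, 0 < gibbsDen T β lam f y := by
  have hM : 0 < ∫ z, Real.exp (-(T / (2 * lam * β)) * f z) := by
    rw [integral_pos_iff_support_of_nonneg (fun y => (Real.exp_pos _).le) hie]
    have hs : (Function.support fun y => Real.exp (-(T / (2 * lam * β)) * f y)) = Set.univ := by
      ext y; simp [Function.mem_support, Real.exp_ne_zero]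
    rw [hs]; exact isOpen_univ.measure_pos volume ⟨0, trivial⟩
  exact fun y => div_pos (Real.exp_pos _) hM

lemma gibbs_int (hie : Integrable fun y => Real.exp (-(T / (2 * lam * β)) * f y)) :
    Integrable (gibbsDen T β lam f) := hie.div_const _

lemma hHC_eq : hHC T β lam f t = hA β (T - t) (gibbsDen T β lam f) := rfl

lemma etaHC_eq : etaHC T β lam f t = etaA β (T - t) (gibbsDen T β lam f) := rfl

lemma PhiHC_eq : (fun w => PhiHC T β lam f t w)
    = fun x => -(2 * β) * Real.log (hA β (T - t) (gibbsDen T β lam f) x) := rfl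

lemma aHC_eq (hβ : 0 < β) (hr : 0 < T - t) (hfc : Continuous f)
    (hie : Integrable fun y => Real.exp (-(T / (2 * lam * β)) * f y))
    (x : EuclideanSpace ℝ (Fin d)) :
    aHC T β lam f t x = aA β (T - t) (gibbsDen T β lam f) x := by
  set r := T - t
  set p := gibbsDen T β lam f with hp
  have hpc : Continuous p := gibbs_cont hfc
  have hpp : ∀ y, 0 < p y := gibbs_pos hie
  have hpi : Integrable p := gibbs_int hie
  have hpos := hA_pos hβ hr hpc hpp hpi x
  have hne : hA β r p x ≠ 0 := ne_of_gt hpos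
  have h1 : aHC T β lam f t x = ∫ y, (hA β r p x)⁻¹ • (KA β r p x y • y) := by
    unfold aHC
    congr 1
    funext y
    have : etaHC T β lam f t x y = KA β r p x y / hA β r p x := rfl
    rw [this, div_eq_inv_mul, ← smul_smul]
  rw [h1, integral_smul]
  have h2 : (∫ y, KA β r p x y • y) = wA β r p x + hA β r p x • x := by
    have h3 : (fun y => KA β r p x y • y)
        = fun y => KA β r p x y • (y - x) + KA β r p x y • x := by
      funext y
      rw [← smul_add, sub_add_cancel]
    rw [h3, integral_add (int_KA_smul hβ hr hpc hpp hpi x)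
      ((int_KA hβ hr hpc hpp hpi x).smul_const x), integral_smul_const]
    rfl
  rw [h2, smul_add, smul_smul, inv_mul_cancel₀ hne, one_smul]
  unfold aA
  rw [add_comm]

end Concrete
section Final
variable {d : ℕ} {β r : ℝ} {p : EuclideanSpace ℝ (Fin d) → ℝ}

lemma lap_key (hβ : 0 < β) (hr : 0 < r) (hpc : Continuous p) (hpp : ∀ y, 0 < p y)
    (hpi : Integrable p) (x : EuclideanSpace ℝ (Fin d)) :
    (d : ℝ) - r * lap (fun w => -(2 * β) * Real.log (hA β r p w)) x
      = (2 * β * r)⁻¹ * ∫ y, ‖y - aA β r p x‖ ^ 2 * etaA β r p x y := by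
  rw [lap_PhiA hβ hr hpc hpp hpi x, var_norm_decomp hβ hr hpc hpp hpi x (aA β r p x),
    Finset.mul_sum, Finset.mul_sum]
  have key : ∀ i : Fin d,
      (2 * β * r)⁻¹ * ∫ y, ⟪EuclideanSpace.single i (1:ℝ), y - aA β r p x⟫ ^ 2 * etaA β r p x y
        = 1 - r * ⟪EuclideanSpace.single i (1:ℝ),
            LA β r p x (EuclideanSpace.single i (1:ℝ))⟫ := by
    intro i
    rw [var_eq hβ hr hpc hpp hpi x _]
    have h1 := key_pointwise hβ hr hpc hpp hpi x (EuclideanSpace.single i (1:ℝ))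
    have hnorm : ‖EuclideanSpace.single i (1:ℝ)‖ = 1 := by
      rw [EuclideanSpace.norm_single]; norm_num
    rw [hnorm] at h1
    simpa using h1.symm
  rw [Finset.sum_congr rfl (fun i _ => key i), Finset.sum_sub_distrib]
  simp [Finset.card_univ]

lemma var_le_norm (hβ : 0 < β) (hr : 0 < r) (hpc : Continuous p) (hpp : ∀ y, 0 < p y)
    (hpi : Integrable p) (x ξ : EuclideanSpace ℝ (Fin d)) :
    ∫ y, ⟪ξ, y - aA β r p x⟫ ^ 2 * etaA β r p x y
      ≤ ‖ξ‖ ^ 2 * ∫ y, ‖y - aA β r p x‖ ^ 2 * etaA β r p x y := by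
  rw [← integral_const_mul]
  refine integral_mono (int_var hβ hr hpc hpp hpi x _ ξ)
    (((int_var_norm hβ hr hpc hpp hpi x _).const_mul (‖ξ‖ ^ 2))) ?_
  intro y
  have hη := etaA_nonneg hβ hr hpc hpp hpi x y
  have h2 := inner_sq_le ξ (y - aA β r p x)
  calc ⟪ξ, y - aA β r p x⟫ ^ 2 * etaA β r p x y
      ≤ (‖ξ‖ ^ 2 * ‖y - aA β r p x‖ ^ 2) * etaA β r p x y :=
        mul_le_mul_of_nonneg_right h2 hη
    _ = ‖ξ‖ ^ 2 * (‖y - aA β r p x‖ ^ 2 * etaA β r p x y) := by ring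

end Final
theorem factorized_osl (d : ℕ) (hd : 1 ≤ d) (T β lam : ℝ)
    (hT : 0 < T) (hβ : 0 < β) (hlam : 0 < lam)
    (f : EuclideanSpace ℝ (Fin d) → ℝ)
    (hf : ContDiff ℝ 2 f)
    (hbdd : BddBelow (Set.range f))
    (hcoer : Tendsto f (cocompact (EuclideanSpace ℝ (Fin d))) atTop)
    (hint : ∀ c > 0,
      Integrable (fun y => Real.exp (-c * f y)) ∧
      Integrable (fun y => ‖gradient f y‖ * Real.exp (-c * f y)) ∧
      Integrable (fun y => ‖iteratedFDeriv ℝ 2 f y‖ * Real.exp (-c * f y)))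
    (t : ℝ) (ht0 : 0 ≤ t) (htT : t < T) (x₁ x₂ : EuclideanSpace ℝ (Fin d)) :
    ⟪aHC T β lam f t x₂ - aHC T β lam f t x₁, x₂ - x₁⟫
      = ∫ θ in (0:ℝ)..1,
          (‖x₂ - x₁‖ ^ 2
            - (T - t) * ⟪fderiv ℝ (fun z => gradient (fun w => PhiHC T β lam f t w) z)
                (x₁ + θ • (x₂ - x₁)) (x₂ - x₁), x₂ - x₁⟫) ∧
    ⟪aHC T β lam f t x₂ - aHC T β lam f t x₁, x₂ - x₁⟫
      = (2 * β * (T - t))⁻¹ *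
          ∫ θ in (0:ℝ)..1,
            ∫ y, ⟪x₂ - x₁, y - aHC T β lam f t (x₁ + θ • (x₂ - x₁))⟫ ^ 2 *
              etaHC T β lam f t (x₁ + θ • (x₂ - x₁)) y ∧
    0 ≤ ⟪aHC T β lam f t x₂ - aHC T β lam f t x₁, x₂ - x₁⟫ ∧
    ⟪aHC T β lam f t x₂ - aHC T β lam f t x₁, x₂ - x₁⟫
      ≤ ‖x₂ - x₁‖ ^ 2 *
          ∫ θ in (0:ℝ)..1,
            ((d : ℝ) - (T - t) * lap (fun w => PhiHC T β lam f t w) (x₁ + θ • (x₂ - x₁))) := by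
  -- setup
  set r := T - t with hrdef
  have hr : 0 < r := sub_pos.mpr htT
  have hc : 0 < T / (2 * lam * β) := by positivity
  have hie : Integrable fun y => Real.exp (-(T / (2 * lam * β)) * f y) :=
    (hint _ hc).1
  set p := gibbsDen T β lam f with hpdef
  have hpc : Continuous p := gibbs_cont hf.continuous
  have hpp : ∀ y, 0 < p y := gibbs_pos hie
  have hpi : Integrable p := gibbs_int hie
  set ξ := x₂ - x₁ with hξ
  have haeq : ∀ x, aHC T β lam f t x = aA β r p x := fun x =>
    aHC_eq hβ hr hf.continuous hie x
  -- claim 1 common form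
  have hLHS : ⟪aHC T β lam f t x₂ - aHC T β lam f t x₁, ξ⟫
      = ∫ θ in (0:ℝ)..1, (‖ξ‖ ^ 2 - r * ⟪ξ, LA β r p (x₁ + θ • ξ) ξ⟫) := by
    rw [haeq, haeq]
    exact main_identity_A hβ hr hpc hpp hpi x₁ x₂
  have hfder : ∀ z : EuclideanSpace ℝ (Fin d),
      fderiv ℝ (fun z => gradient (fun w => PhiHC T β lam f t w) z) z = LA β r p z := by
    intro z
    have : (fun z => gradient (fun w => PhiHC T β lam f t w) z)
        = fun z => gradient (fun w => -(2 * β) * Real.log (hA β r p w)) z := rfl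
    rw [this]
    exact fderiv_gradPhiA hβ hr hpc hpp hpi z
  have claim1 : ⟪aHC T β lam f t x₂ - aHC T β lam f t x₁, ξ⟫
      = ∫ θ in (0:ℝ)..1,
          (‖ξ‖ ^ 2
            - r * ⟪fderiv ℝ (fun z => gradient (fun w => PhiHC T β lam f t w) z)
                (x₁ + θ • ξ) ξ, ξ⟫) := by
    rw [hLHS]
    refine intervalIntegral.integral_congr fun θ _ => ?_
    rw [hfder (x₁ + θ • ξ), real_inner_comm]
  -- pointwise variance identity
  have hvar : ∀ θ : ℝ, ‖ξ‖ ^ 2 - r * ⟪ξ, LA β r p (x₁ + θ • ξ) ξ⟫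
      = (2 * β * r)⁻¹ *
        ∫ y, ⟪ξ, y - aHC T β lam f t (x₁ + θ • ξ)⟫ ^ 2 *
          etaHC T β lam f t (x₁ + θ • ξ) y := by
    intro θ
    rw [key_pointwise hβ hr hpc hpp hpi (x₁ + θ • ξ) ξ,
      ← var_eq hβ hr hpc hpp hpi (x₁ + θ • ξ) ξ, haeq (x₁ + θ • ξ)]
    rfl
  have claim2 : ⟪aHC T β lam f t x₂ - aHC T β lam f t x₁, ξ⟫
      = (2 * β * r)⁻¹ *
          ∫ θ in (0:ℝ)..1,
            ∫ y, ⟪ξ, y - aHC T β lam f t (x₁ + θ • ξ)⟫ ^ 2 *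
              etaHC T β lam f t (x₁ + θ • ξ) y := by
    rw [hLHS, ← intervalIntegral.integral_const_mul]
    exact intervalIntegral.integral_congr fun θ _ => hvar θ
  have claim3 : 0 ≤ ⟪aHC T β lam f t x₂ - aHC T β lam f t x₁, ξ⟫ := by
    rw [claim2]
    have h2βr : (0:ℝ) ≤ (2 * β * r)⁻¹ := by positivity
    refine mul_nonneg h2βr ?_
    refine intervalIntegral.integral_nonneg zero_le_one fun θ _ => ?_
    refine integral_nonneg fun y => ?_
    have hη : 0 ≤ etaHC T β lam f t (x₁ + θ • ξ) y :=
      etaA_nonneg hβ hr hpc hpp hpi (x₁ + θ • ξ) y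
    exact mul_nonneg (sq_nonneg _) hη
  have claim4 : ⟪aHC T β lam f t x₂ - aHC T β lam f t x₁, ξ⟫
      ≤ ‖ξ‖ ^ 2 *
          ∫ θ in (0:ℝ)..1,
            ((d : ℝ) - r * lap (fun w => PhiHC T β lam f t w) (x₁ + θ • ξ)) := by
    rw [hLHS, ← intervalIntegral.integral_const_mul]
    have hlap_eq : ∀ z : EuclideanSpace ℝ (Fin d),
        lap (fun w => PhiHC T β lam f t w) z
          = lap (fun w => -(2 * β) * Real.log (hA β r p w)) z := fun z => rfl
    have hbound : ∀ θ : ℝ, ‖ξ‖ ^ 2 - r * ⟪ξ, LA β r p (x₁ + θ • ξ) ξ⟫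
        ≤ ‖ξ‖ ^ 2 * ((d : ℝ) - r * lap (fun w => PhiHC T β lam f t w) (x₁ + θ • ξ)) := by
      intro θ
      rw [hlap_eq, key_pointwise hβ hr hpc hpp hpi (x₁ + θ • ξ) ξ,
        ← var_eq hβ hr hpc hpp hpi (x₁ + θ • ξ) ξ,
        lap_key hβ hr hpc hpp hpi (x₁ + θ • ξ)]
      have h2βr : (0:ℝ) ≤ (2 * β * r)⁻¹ := by positivity
      have := var_le_norm hβ hr hpc hpp hpi (x₁ + θ • ξ) ξ
      calc (2 * β * r)⁻¹ * ∫ y, ⟪ξ, y - aA β r p (x₁ + θ • ξ)⟫ ^ 2 * etaA β r p (x₁ + θ • ξ) y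
          ≤ (2 * β * r)⁻¹ * (‖ξ‖ ^ 2 * ∫ y, ‖y - aA β r p (x₁ + θ • ξ)‖ ^ 2 *
              etaA β r p (x₁ + θ • ξ) y) := mul_le_mul_of_nonneg_left this h2βr
        _ = ‖ξ‖ ^ 2 * ((2 * β * r)⁻¹ * ∫ y, ‖y - aA β r p (x₁ + θ • ξ)‖ ^ 2 *
              etaA β r p (x₁ + θ • ξ) y) := by ring
    refine intervalIntegral.integral_mono_on zero_le_one ?_ ?_ fun θ _ => hbound θ
    · exact (continuous_const.sub (continuous_const.mul
        (G1_cont hβ hr hpc hpp hpi x₁ ξ))).intervalIntegrable 0 1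
    · have hsum : (fun θ : ℝ => ‖ξ‖ ^ 2 * ((d : ℝ)
          - r * lap (fun w => PhiHC T β lam f t w) (x₁ + θ • ξ)))
          = fun θ : ℝ => ‖ξ‖ ^ 2 * ((d : ℝ) - r * ∑ i : Fin d,
              ⟪EuclideanSpace.single i (1:ℝ),
                LA β r p (x₁ + θ • ξ) (EuclideanSpace.single i (1:ℝ))⟫) := by
        funext θ
        rw [hlap_eq, lap_PhiA hβ hr hpc hpp hpi]
      rw [hsum]
      refine (continuous_const.mul (continuous_const.sub
        (continuous_const.mul (continuous_finset_sum _ fun i _ => ?_)))).intervalIntegrable 0 1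
      exact (LA_inner_cont hβ hr hpc hpp hpi _).comp (seg_cont x₁ ξ)
  exact ⟨claim1, claim2, claim3, claim4⟩
end
end

section
/- Under Assumptions (A) and (B), for every r > 0 there exist constants C_r > 0, c_r > 0 and λ_r > 0 such that for every λ ∈ (0, λ_r], ∫_{{y : ‖y − x*‖ ≥ r}} π_λ(y) dy ≤ C_r e^{−c_r/λ}. In particular, the probability measures π_λ(y) dy converge narrowly to the Dirac mass δ_{x*} as λ ↓ 0. -/
open MeasureTheory Real Filter Topology
open scoped RealInnerProductSpace

noncomputable section

/-!
Coercivity and uniqueness of the minimizer give a gap `f ≥ f* + δ` on `{‖y - x*‖ ≥ r}`, while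
continuity gives `f ≤ f* + δ/2` on a small ball around `x*`. Comparing the unnormalized Gibbs
weight `e^{-α f}` on these two sets bounds the tail mass by a constant times `e^{-α δ/2}`, with
`α = T/(2λβ)`. Narrow convergence to `δ_{x*}` follows: a bounded continuous `φ` is `ε`-close to
`φ x*` on a small ball, and the mass outside that ball vanishes as `λ ↓ 0`.
-/

open scoped ENNReal

theorem exists_add_le_of_tendsto_cocompact {X : Type*} [TopologicalSpace X] {f : X → ℝ}
    {s : Set X} {m : ℝ} (hf : Continuous f) (hcoer : Tendsto f (cocompact X) atTop)
    (hs : IsClosed s) (hm : ∀ y ∈ s, m < f y) : ∃ δ > 0, ∀ y ∈ s, m + δ ≤ f y := by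
  rcases s.eq_empty_or_nonempty with rfl | ⟨x₀, hx₀⟩
  · exact ⟨1, one_pos, by simp⟩
  obtain ⟨y₀, hy₀, hy₀min⟩ := hf.continuousOn.exists_isMinOn' hs hx₀
    ((hcoer.eventually_ge_atTop (f x₀)).filter_mono inf_le_left)
  exact ⟨f y₀ - m, sub_pos.2 (hm y₀ hy₀), fun y hy => by linarith [isMinOn_iff.1 hy₀min y hy]⟩

section Laplace

variable {X : Type*} [MeasurableSpace X] {μ : Measure X} {f : X → ℝ}

theorem setIntegral_exp_neg_mul_le {S : Set X} {a α₁ α : ℝ} (hS : MeasurableSet S)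
    (hfS : ∀ y ∈ S, a ≤ f y) (hα : α₁ ≤ α) (hI : Integrable (fun y => exp (-α₁ * f y)) μ) :
    ∫ y in S, exp (-α * f y) ∂μ ≤ exp (-(α - α₁) * a) * ∫ y, exp (-α₁ * f y) ∂μ := by
  have hpt : ∀ y ∈ S, exp (-α * f y) ≤ exp (-(α - α₁) * a) * exp (-α₁ * f y) := by
    intro y hy
    rw [← exp_add]
    exact exp_le_exp.2 (by nlinarith [hfS y hy])
  calc ∫ y in S, exp (-α * f y) ∂μ
      ≤ ∫ y in S, exp (-(α - α₁) * a) * exp (-α₁ * f y) ∂μ :=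
        integral_mono_of_nonneg (.of_forall fun _ => (exp_pos _).le)
          (hI.const_mul _).integrableOn ((ae_restrict_iff' hS).2 (.of_forall hpt))
    _ = exp (-(α - α₁) * a) * ∫ y in S, exp (-α₁ * f y) ∂μ := integral_const_mul _ _
    _ ≤ exp (-(α - α₁) * a) * ∫ y, exp (-α₁ * f y) ∂μ :=
        mul_le_mul_of_nonneg_left
          (setIntegral_le_integral hI (.of_forall fun _ => (exp_pos _).le)) (exp_pos _).le

theorem exp_neg_mul_mul_measureReal_le_integral {B : Set X} {b α : ℝ} (hB : MeasurableSet B)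
    (hμB : μ B ≠ ∞) (hfB : ∀ y ∈ B, f y ≤ b) (hα : 0 ≤ α)
    (hI : Integrable (fun y => exp (-α * f y)) μ) :
    exp (-α * b) * μ.real B ≤ ∫ y, exp (-α * f y) ∂μ :=
  (setIntegral_ge_of_const_le_real hB hμB
      (fun y hy => exp_le_exp.2 (by nlinarith [hfB y hy])) hI.integrableOn).trans
    (setIntegral_le_integral hI (.of_forall fun _ => (exp_pos _).le))

theorem setIntegral_exp_div_integral_exp_le {S B : Set X} {a b α₁ α : ℝ} (hS : MeasurableSet S)
    (hfS : ∀ y ∈ S, a ≤ f y) (hB : MeasurableSet B) (hμB : μ B ≠ ∞) (hB_pos : 0 < μ.real B)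
    (hfB : ∀ y ∈ B, f y ≤ b) (hα₁ : 0 ≤ α₁) (hα : α₁ ≤ α)
    (hI₁ : Integrable (fun y => exp (-α₁ * f y)) μ) (hI : Integrable (fun y => exp (-α * f y)) μ) :
    (∫ y in S, exp (-α * f y) ∂μ) / ∫ y, exp (-α * f y) ∂μ
      ≤ (∫ y, exp (-α₁ * f y) ∂μ) / μ.real B * exp (α₁ * a) * exp (-α * (a - b)) := by
  have hI₁_nonneg : 0 ≤ ∫ y, exp (-α₁ * f y) ∂μ := integral_nonneg fun _ => (exp_pos _).le
  calc (∫ y in S, exp (-α * f y) ∂μ) / ∫ y, exp (-α * f y) ∂μ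
      ≤ exp (-(α - α₁) * a) * (∫ y, exp (-α₁ * f y) ∂μ) / (exp (-α * b) * μ.real B) :=
        div_le_div₀ (by positivity) (setIntegral_exp_neg_mul_le hS hfS hα hI₁) (by positivity)
          (exp_neg_mul_mul_measureReal_le_integral hB hμB hfB (hα₁.trans hα) hI)
    _ = _ := by
        rw [show exp (-(α - α₁) * a) = exp (α₁ * a) * exp (-α * (a - b)) * exp (-α * b) by
          rw [← exp_add, ← exp_add]; ring_nf]
        field_simp

end Laplace

section Concentration

variable {X : Type*} [PseudoMetricSpace X] [MeasurableSpace X] [OpensMeasurableSpace X]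
  {μ : Measure X} {φ : X → ℝ} {x₀ : X}

theorem abs_integral_mul_sub_le {g : X → ℝ} {r ε C : ℝ} (hg_nonneg : ∀ y, 0 ≤ g y)
    (hg_int : Integrable g μ) (hg_one : ∫ y, g y ∂μ = 1) (hφ : AEStronglyMeasurable φ μ)
    (hφC : ∀ y, |φ y| ≤ C) (hε : 0 ≤ ε) (hφε : ∀ y ∈ Metric.ball x₀ r, |φ y - φ x₀| ≤ ε) :
    |∫ y, φ y * g y ∂μ - φ x₀| ≤ ε + 2 * C * ∫ y in (Metric.ball x₀ r)ᶜ, g y ∂μ := by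
  have hφ_sub : ∀ y, |φ y - φ x₀| ≤ 2 * C := fun y => by
    linarith [abs_sub (φ y) (φ x₀), hφC y, hφC x₀]
  have hφg : Integrable (fun y => φ y * g y) μ :=
    hg_int.bdd_mul hφ (.of_forall fun y => (Real.norm_eq_abs _).trans_le (hφC y))
  have hφg_sub : Integrable (fun y => (φ y - φ x₀) * g y) μ :=
    hg_int.bdd_mul (hφ.sub aestronglyMeasurable_const)
      (.of_forall fun y => (Real.norm_eq_abs _).trans_le (hφ_sub y))
  have hpt : ∀ y, |(φ y - φ x₀) * g y|
      ≤ ε * g y + (Metric.ball x₀ r)ᶜ.indicator (fun y => 2 * C * g y) y := by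
    intro y
    rw [abs_mul, abs_of_nonneg (hg_nonneg y)]
    by_cases hy : y ∈ Metric.ball x₀ r
    · simp only [Set.indicator_of_notMem (Set.notMem_compl_iff.2 hy), add_zero]
      exact mul_le_mul_of_nonneg_right (hφε y hy) (hg_nonneg y)
    · rw [Set.indicator_of_mem (Set.mem_compl hy)]
      nlinarith [hφ_sub y, hg_nonneg y]
  calc |∫ y, φ y * g y ∂μ - φ x₀| = |∫ y, (φ y - φ x₀) * g y ∂μ| := by
        simp_rw [sub_mul]
        rw [integral_sub hφg (hg_int.const_mul _), integral_const_mul, hg_one, mul_one]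
    _ ≤ ∫ y, |(φ y - φ x₀) * g y| ∂μ := abs_integral_le_integral_abs
    _ ≤ ∫ y, (ε * g y + (Metric.ball x₀ r)ᶜ.indicator (fun y => 2 * C * g y) y) ∂μ :=
        integral_mono hφg_sub.abs
          ((hg_int.const_mul ε).add ((hg_int.const_mul _).indicator measurableSet_ball.compl)) hpt
    _ = ε + 2 * C * ∫ y in (Metric.ball x₀ r)ᶜ, g y ∂μ := by
        rw [integral_add (hg_int.const_mul ε)
            ((hg_int.const_mul _).indicator measurableSet_ball.compl),
          integral_const_mul, hg_one, integral_indicator measurableSet_ball.compl,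
          integral_const_mul, mul_one]

theorem tendsto_integral_mul_of_tendsto_setIntegral_compl_ball {ι : Type*} {l : Filter ι}
    {g : ι → X → ℝ}
    (hg : ∀ᶠ i in l, (∀ y, 0 ≤ g i y) ∧ Integrable (g i) μ ∧ ∫ y, g i y ∂μ = 1)
    (htail : ∀ r > 0, Tendsto (fun i => ∫ y in (Metric.ball x₀ r)ᶜ, g i y ∂μ) l (𝓝 0))
    (hφ_cont : ContinuousAt φ x₀) (hφ : AEStronglyMeasurable φ μ) (hφC : ∃ C, ∀ y, |φ y| ≤ C) :
    Tendsto (fun i => ∫ y, φ y * g i y ∂μ) l (𝓝 (φ x₀)) := by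
  obtain ⟨C, hC⟩ := hφC
  rw [Metric.tendsto_nhds]
  intro ε hε
  obtain ⟨r, hr, hφr⟩ := Metric.continuousAt_iff.1 hφ_cont (ε / 2) (half_pos hε)
  have hsmall : ∀ᶠ i in l, 2 * C * ∫ y in (Metric.ball x₀ r)ᶜ, g i y ∂μ < ε / 2 := by
    have h := (htail r hr).const_mul (2 * C)
    rw [mul_zero] at h
    exact h.eventually_lt_const (half_pos hε)
  filter_upwards [hg, hsmall] with i ⟨hg_nonneg, hg_int, hg_one⟩ hi
  rw [Real.dist_eq]
  calc |∫ y, φ y * g i y ∂μ - φ x₀| ≤ ε / 2 + 2 * C * ∫ y in (Metric.ball x₀ r)ᶜ, g i y ∂μ :=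
        abs_integral_mul_sub_le hg_nonneg hg_int hg_one hφ hC (half_pos hε).le
          fun y hy => (Real.dist_eq _ _ ▸ hφr hy).le
    _ < ε := by linarith

end Concentration

theorem tendsto_exp_neg_div_nhdsGT_zero {c : ℝ} (hc : 0 < c) :
    Tendsto (fun t : ℝ => exp (-c / t)) (𝓝[>] 0) (𝓝 0) := by
  have h : Tendsto (fun t : ℝ => c / t) (𝓝[>] 0) atTop := by
    simpa [div_eq_mul_inv] using tendsto_inv_nhdsGT_zero.const_mul_atTop hc
  exact (tendsto_exp_neg_atTop_nhds_zero.comp h).congr fun t => by simp [neg_div]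

section Gibbs

variable {d : ℕ} {T β lam : ℝ} {f : EuclideanSpace ℝ (Fin d) → ℝ}

theorem gibbsDen_nonneg (y : EuclideanSpace ℝ (Fin d)) : 0 ≤ gibbsDen T β lam f y :=
  div_nonneg (exp_pos _).le (integral_nonneg fun _ => (exp_pos _).le)

theorem integrable_gibbsDen (hI : Integrable (fun y => exp (-(T / (2 * lam * β)) * f y))) :
    Integrable (gibbsDen T β lam f) :=
  hI.div_const _

theorem integral_gibbsDen (hI : Integrable (fun y => exp (-(T / (2 * lam * β)) * f y))) :
    ∫ y, gibbsDen T β lam f y = 1 := by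
  simp only [gibbsDen]
  rw [integral_div, div_self (integral_exp_pos hI).ne']

theorem setIntegral_gibbsDen (S : Set (EuclideanSpace ℝ (Fin d))) :
    ∫ y in S, gibbsDen T β lam f y
      = (∫ y in S, exp (-(T / (2 * lam * β)) * f y)) / ∫ y, exp (-(T / (2 * lam * β)) * f y) :=
  integral_div _ _

end Gibbs

theorem gibbsDen_tail_le {d : ℕ} {T β : ℝ} (hT : 0 < T) (hβ : 0 < β)
    {f : EuclideanSpace ℝ (Fin d) → ℝ} (hf : Continuous f)
    (hcoer : Tendsto f (cocompact (EuclideanSpace ℝ (Fin d))) atTop)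
    (hint : ∀ c > 0, Integrable (fun y => exp (-c * f y)))
    {xstar : EuclideanSpace ℝ (Fin d)} (hmin : ∀ y, f xstar ≤ f y)
    (huniq : ∀ y, f y = f xstar → y = xstar) {r : ℝ} (hr : 0 < r) :
    ∃ C > 0, ∃ c > 0, ∃ lam₀ > 0, ∀ lam ∈ Set.Ioc (0:ℝ) lam₀,
      (∫ y in {y : EuclideanSpace ℝ (Fin d) | r ≤ ‖y - xstar‖}, gibbsDen T β lam f y)
        ≤ C * exp (-c / lam) := by
  set S := {y : EuclideanSpace ℝ (Fin d) | r ≤ ‖y - xstar‖}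
  have hS : IsClosed S := isClosed_le continuous_const (continuous_id.sub continuous_const).norm
  have hlt : ∀ y ∈ S, f xstar < f y := fun y hy => (hmin y).lt_of_ne fun h => by
    have hy : r ≤ ‖y - xstar‖ := hy
    rw [huniq y h.symm, sub_self, norm_zero] at hy
    linarith
  obtain ⟨δ, hδ, hfS⟩ := exists_add_le_of_tendsto_cocompact hf hcoer hS hlt
  obtain ⟨ρ, hρ, hfB⟩ : ∃ ρ > 0, ∀ y ∈ Metric.closedBall xstar ρ, f y ≤ f xstar + δ / 2 :=
    Metric.nhds_basis_closedBall.eventually_iff.1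
      ((hf.tendsto xstar).eventually (eventually_le_nhds (by linarith)))
  have hB_pos : 0 < volume.real (Metric.closedBall xstar ρ) :=
    ENNReal.toReal_pos (Metric.measure_closedBall_pos volume xstar hρ).ne'
      measure_closedBall_lt_top.ne
  set α₁ := T / (2 * β)
  have hα₁ : 0 < α₁ := by positivity
  have hI₁_pos : 0 < ∫ y, exp (-α₁ * f y) := integral_exp_pos (hint α₁ hα₁)
  -- `α₁` is the inverse temperature at `λ = 1`; it controls the tail integral for all `λ ≤ 1`.
  refine ⟨(∫ y, exp (-α₁ * f y)) / volume.real (Metric.closedBall xstar ρ) *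
    exp (α₁ * (f xstar + δ)), by positivity, T * δ / (4 * β), by positivity, 1, one_pos, ?_⟩
  rintro lam ⟨hlam, hlam_le⟩
  have hα : α₁ ≤ T / (2 * lam * β) :=
    div_le_div_of_nonneg_left hT.le (by positivity) (by nlinarith)
  rw [setIntegral_gibbsDen]
  convert setIntegral_exp_div_integral_exp_le hS.measurableSet hfS
    Metric.isClosed_closedBall.measurableSet measure_closedBall_lt_top.ne hB_pos hfB hα₁.le hα
    (hint α₁ hα₁) (hint _ (hα₁.trans_le hα)) using 3
  field_simp
  ring

theorem gibbs_concentration_general (d : ℕ) (T β : ℝ)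
    (hT : 0 < T) (hβ : 0 < β)
    (f : EuclideanSpace ℝ (Fin d) → ℝ)
    (hf : ContDiff ℝ 2 f)
    (hcoer : Tendsto f (cocompact (EuclideanSpace ℝ (Fin d))) atTop)
    (hint : ∀ c > 0,
      Integrable (fun y => Real.exp (-c * f y)) ∧
      Integrable (fun y => ‖gradient f y‖ * Real.exp (-c * f y)) ∧
      Integrable (fun y => ‖iteratedFDeriv ℝ 2 f y‖ * Real.exp (-c * f y)))
    (xstar : EuclideanSpace ℝ (Fin d))
    (hmin : ∀ y, f xstar ≤ f y)
    (huniq : ∀ y, f y = f xstar → y = xstar) :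
    (∀ r > 0, ∃ C > 0, ∃ c > 0, ∃ lam₀ > 0, ∀ lam ∈ Set.Ioc (0:ℝ) lam₀,
      (∫ y in {y : EuclideanSpace ℝ (Fin d) | r ≤ ‖y - xstar‖}, gibbsDen T β lam f y)
        ≤ C * Real.exp (-c / lam)) ∧
    (∀ φ : EuclideanSpace ℝ (Fin d) → ℝ, Continuous φ → (∃ Cb, ∀ y, |φ y| ≤ Cb) →
      Tendsto (fun lam : ℝ => ∫ y, φ y * gibbsDen T β lam f y) (𝓝[>] 0) (𝓝 (φ xstar))) := by
  have hint_exp : ∀ c > 0, Integrable (fun y => exp (-c * f y)) := fun c hc => (hint c hc).1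
  have htail := fun r (hr : 0 < r) =>
    gibbsDen_tail_le hT hβ hf.continuous hcoer hint_exp hmin huniq hr
  refine ⟨htail, fun φ hφ hφC => tendsto_integral_mul_of_tendsto_setIntegral_compl_ball ?_
    (fun r hr => ?_) hφ.continuousAt hφ.aestronglyMeasurable hφC⟩
  · filter_upwards [self_mem_nhdsWithin] with lam (hlam : 0 < lam)
    have hI := hint_exp _ (by positivity : 0 < T / (2 * lam * β))
    exact ⟨gibbsDen_nonneg, integrable_gibbsDen hI, integral_gibbsDen hI⟩
  obtain ⟨C, -, c, hc, lam₀, hlam₀, hle⟩ := htail r hr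
  have hball : (Metric.ball xstar r)ᶜ = {y | r ≤ ‖y - xstar‖} := by
    ext y; simp [dist_eq_norm]
  rw [hball]
  refine tendsto_of_tendsto_of_tendsto_of_le_of_le' tendsto_const_nhds
    (by simpa using (tendsto_exp_neg_div_nhdsGT_zero hc).const_mul C)
    (.of_forall fun lam => setIntegral_nonneg_of_ae_restrict (.of_forall gibbsDen_nonneg))
    (mem_of_superset (Ioc_mem_nhdsGT hlam₀) hle)

theorem gibbs_concentration (d : ℕ) (hd : 1 ≤ d) (T β : ℝ)
    (hT : 0 < T) (hβ : 0 < β)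
    (f : EuclideanSpace ℝ (Fin d) → ℝ)
    (hf : ContDiff ℝ 2 f)
    (hbdd : BddBelow (Set.range f))
    (hcoer : Tendsto f (cocompact (EuclideanSpace ℝ (Fin d))) atTop)
    (hint : ∀ c > 0,
      Integrable (fun y => Real.exp (-c * f y)) ∧
      Integrable (fun y => ‖gradient f y‖ * Real.exp (-c * f y)) ∧
      Integrable (fun y => ‖iteratedFDeriv ℝ 2 f y‖ * Real.exp (-c * f y)))
    (xstar : EuclideanSpace ℝ (Fin d))
    (hmin : ∀ y, f xstar ≤ f y)
    (huniq : ∀ y, f y = f xstar → y = xstar) :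
    (∀ r > 0, ∃ C > 0, ∃ c > 0, ∃ lam₀ > 0, ∀ lam ∈ Set.Ioc (0:ℝ) lam₀,
      (∫ y in {y : EuclideanSpace ℝ (Fin d) | r ≤ ‖y - xstar‖}, gibbsDen T β lam f y)
        ≤ C * Real.exp (-c / lam)) ∧
    (∀ φ : EuclideanSpace ℝ (Fin d) → ℝ, Continuous φ → (∃ Cb, ∀ y, |φ y| ≤ Cb) →
      Tendsto (fun lam : ℝ => ∫ y, φ y * gibbsDen T β lam f y) (𝓝[>] 0) (𝓝 (φ xstar))) :=
  gibbs_concentration_general d T β hT hβ f hf hcoer hint xstar hmin huniq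
end
end
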